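/- arXiv:1703.00339 — 10 statements merged into one kernel-verified Lean document; each statement's English description precedes it below -/
import Mathlib

section
/- Let u : [0,T] → ℝ^N be differentiable with u(0) = u_init and satisfy τ_i u_i'(t) = -u_i(t) + Σ_{j=1}^N ω_{ij} S(u_j(t) - u_θ) + q_i(t) for all t ∈ (0,T] and all i = 1,…,N, where 0 ≤ S(x) ≤ 1 for all x ∈ ℝ, each τ_i > 0, and |q_i(t)| ≤ B for all i and all t ∈ [0,T]. Then for every t ∈ [0,T], max_{1≤i≤N} |u_i(t)| ≤ max_{1≤i≤N} |u_{init,i}| + max_{1≤i≤N} Σ_{j=1}^N |ω_{ij}| + B. -/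
open Set Finset Filter MeasureTheory

lemma decay_helper (T τ M0 K : ℝ) (hτ : 0 < τ) (hM0 : 0 ≤ M0) (hK : 0 ≤ K)
    (v v' : ℝ → ℝ) (hc : ContinuousOn v (Set.Icc 0 T))
    (hd : ∀ s ∈ Set.Ioo (0:ℝ) T, HasDerivAt v (v' s) s)
    (hineq : ∀ s ∈ Set.Ioo (0:ℝ) T, τ * v' s ≤ -v s + K)
    (h0 : v 0 ≤ M0) : ∀ t ∈ Set.Icc (0:ℝ) T, v t ≤ M0 + K := by
  set ψ : ℝ → ℝ := fun s => Real.exp (s / τ) * (v s - K) with hψ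
  have hψd : ∀ s ∈ Set.Ioo (0:ℝ) T, HasDerivAt ψ
      (Real.exp (s / τ) * (1 / τ) * (v s - K) + Real.exp (s / τ) * v' s) s := by
    intro s hs
    exact (((hasDerivAt_id s).div_const τ).exp).mul ((hd s hs).sub_const K)
  have hcont : ContinuousOn ψ (Set.Icc 0 T) :=
    (Real.continuous_exp.comp (continuous_id.div_const τ)).continuousOn.mul
      (hc.sub continuousOn_const)
  have hanti : AntitoneOn ψ (Set.Icc 0 T) := by
    apply antitoneOn_of_deriv_nonpos (convex_Icc 0 T) hcont
    · rw [interior_Icc]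
      intro s hs
      exact (hψd s hs).differentiableAt.differentiableWithinAt
    · rw [interior_Icc]
      intro s hs
      rw [(hψd s hs).deriv]
      have hE := Real.exp_pos (s / τ)
      have h2 := mul_le_mul_of_nonneg_left (hineq s hs) hE.le
      have h3 : Real.exp (s / τ) * (1 / τ) * (v s - K) + Real.exp (s / τ) * v' s
          = (Real.exp (s / τ) * (v s - K) + Real.exp (s / τ) * (τ * v' s)) / τ := by
        field_simp
      rw [h3]
      apply div_nonpos_of_nonpos_of_nonneg _ hτ.le
      nlinarith
  intro t ht
  have key : ψ t ≤ ψ 0 := hanti (Set.left_mem_Icc.2 (ht.1.trans ht.2)) ht ht.1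
  have hE1 : (1:ℝ) ≤ Real.exp (t / τ) := by
    rw [Real.one_le_exp_iff]
    exact div_nonneg ht.1 hτ.le
  simp only [hψ, zero_div, Real.exp_zero, one_mul] at key
  by_cases hcase : v t ≤ K
  · linarith
  · push_neg at hcase
    have : v t - K ≤ Real.exp (t / τ) * (v t - K) :=
      le_mul_of_one_le_left (by linarith) hE1
    linarith

theorem stmt_0
    (N : ℕ) [NeZero N] (T : ℝ) (hT : 0 < T)
    (τ : Fin N → ℝ) (hτ : ∀ i, 0 < τ i)
    (ω : Fin N → Fin N → ℝ) (uθ : ℝ) (uinit : Fin N → ℝ)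
    (S : ℝ → ℝ) (hS : ∀ x, S x ∈ Set.Icc (0:ℝ) 1)
    (q : ℝ → Fin N → ℝ) (hq_cont : ContinuousOn q (Set.Icc 0 T))
    (B : ℝ) (hB : 0 ≤ B) (hqB : ∀ t ∈ Set.Icc (0:ℝ) T, ∀ i, |q t i| ≤ B)
    (u u' : ℝ → Fin N → ℝ)
    (hderiv : ∀ t ∈ Set.Icc (0:ℝ) T, HasDerivWithinAt u (u' t) (Set.Icc 0 T) t)
    (hinit : u 0 = uinit)
    (hODE : ∀ t ∈ Set.Ioc (0:ℝ) T, ∀ i,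
      τ i * u' t i = -u t i + (∑ j, ω i j * S (u t j - uθ)) + q t i) :
    ∀ t ∈ Set.Icc (0:ℝ) T, ∀ i, |u t i| ≤
      (Finset.univ.sup' Finset.univ_nonempty fun i => |uinit i|)
      + (Finset.univ.sup' Finset.univ_nonempty fun i => ∑ j, |ω i j|) + B := by
  intro t ht i
  set M0 : ℝ := Finset.univ.sup' Finset.univ_nonempty fun i => |uinit i| with hM0def
  set W : ℝ := Finset.univ.sup' Finset.univ_nonempty fun i => ∑ j, |ω i j| with hWdef
  have hM0i : |uinit i| ≤ M0 := by
    rw [hM0def]; exact Finset.le_sup' (fun j => |uinit j|) (Finset.mem_univ i)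
  have hWi : (∑ j, |ω i j|) ≤ W := by
    rw [hWdef]; exact Finset.le_sup' (fun k => ∑ j, |ω k j|) (Finset.mem_univ i)
  have hM0 : 0 ≤ M0 := le_trans (abs_nonneg _) hM0i
  have hW : 0 ≤ W := le_trans (Finset.sum_nonneg fun j _ => abs_nonneg _) hWi
  -- derivative of the i-th component
  have hdi : ∀ s ∈ Set.Icc (0:ℝ) T,
      HasDerivWithinAt (fun r => u r i) (u' s i) (Set.Icc 0 T) s := by
    intro s hs
    exact (ContinuousLinearMap.proj (R := ℝ) (φ := fun _ : Fin N => ℝ)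
      i).hasFDerivAt.comp_hasDerivWithinAt s (hderiv s hs)
  have hci : ContinuousOn (fun r => u r i) (Set.Icc 0 T) :=
    fun s hs => (hdi s hs).continuousWithinAt
  have hdi' : ∀ s ∈ Set.Ioo (0:ℝ) T, HasDerivAt (fun r => u r i) (u' s i) s := by
    intro s hs
    exact (hdi s ⟨hs.1.le, hs.2.le⟩).hasDerivAt
      (Icc_mem_nhds hs.1 hs.2)
  -- bound on the forcing term
  have hf : ∀ s ∈ Set.Ioo (0:ℝ) T,
      |(∑ j, ω i j * S (u s j - uθ)) + q s i| ≤ W + B := by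
    intro s hs
    have h1 : |∑ j, ω i j * S (u s j - uθ)| ≤ ∑ j, |ω i j| := by
      refine le_trans (Finset.abs_sum_le_sum_abs _ _) (Finset.sum_le_sum fun j _ => ?_)
      rw [abs_mul]
      have := hS (u s j - uθ)
      calc |ω i j| * |S (u s j - uθ)| ≤ |ω i j| * 1 := by
            apply mul_le_mul_of_nonneg_left _ (abs_nonneg _)
            rw [abs_le]; constructor <;> [linarith [this.1]; exact this.2]
        _ = |ω i j| := mul_one _
    have h2 : |q s i| ≤ B := hqB s ⟨hs.1.le, hs.2.le⟩ i
    calc |(∑ j, ω i j * S (u s j - uθ)) + q s i|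
        ≤ |∑ j, ω i j * S (u s j - uθ)| + |q s i| := abs_add_le _ _
      _ ≤ W + B := add_le_add (h1.trans hWi) h2
  have hode : ∀ s ∈ Set.Ioo (0:ℝ) T,
      τ i * u' s i = -u s i + ((∑ j, ω i j * S (u s j - uθ)) + q s i) := by
    intro s hs
    have := hODE s ⟨hs.1, hs.2.le⟩ i
    linarith
  have hupper : u t i ≤ M0 + (W + B) := by
    refine decay_helper T (τ i) M0 (W + B) (hτ i) hM0 (by linarith)
      (fun r => u r i) (fun r => u' r i) hci hdi' ?_ ?_ t ht
    · intro s hs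
      have h1 := hode s hs
      have h2 := (abs_le.1 (hf s hs)).2
      linarith
    · show u 0 i ≤ M0
      rw [hinit]
      exact (abs_le.1 hM0i).2
  have hlower : -(u t i) ≤ M0 + (W + B) := by
    refine decay_helper T (τ i) M0 (W + B) (hτ i) hM0 (by linarith)
      (fun r => -(u r i)) (fun r => -(u' r i)) hci.neg
      (fun s hs => (hdi' s hs).neg) ?_ ?_ t ht
    · intro s hs
      have h1 := hode s hs
      have h2 := (abs_le.1 (hf s hs)).1
      linarith
    · show -(u 0 i) ≤ M0
      rw [hinit]
      linarith [(abs_le.1 hM0i).1]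
  rw [abs_le]
  constructor <;> [linarith; linarith]
end

section
/- Let u : [0,T] → ℝ^N be differentiable with u(0) = u_init and satisfy τ_i u_i'(t) = -u_i(t) + Σ_{j=1}^N ω_{ij} S(u_j(t) - u_θ) + q_i(t) for all t ∈ (0,T] and all i = 1,…,N, where 0 ≤ S(x) ≤ 1 for all x ∈ ℝ, each τ_i > 0, and |q_i(t)| ≤ B for all i and all t ∈ [0,T]. Then for every t ∈ (0,T], max_{1≤i≤N} |u_i'(t)| ≤ (min_{1≤i≤N} τ_i)^{-1} · ( max_{1≤i≤N} |u_{init,i}| + 2 max_{1≤i≤N} Σ_{j=1}^N |ω_{ij}| + 2B ). -/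
/-! Each coordinate `v = uᵢ` solves a relaxation equation `τ v' + v = f` whose forcing
`f = ∑ⱼ ωᵢⱼ S(uⱼ - u_θ) + qᵢ` is bounded by `K = ∑ⱼ |ωᵢⱼ| + B`. Multiplying by the integrating
factor `exp (t / τ)` shows that `|v|` can never exceed `|v(0)| + K`, and then the equation itself
gives `τ |v'| ≤ |v| + K ≤ |v(0)| + 2K`. -/

open Set Finset

theorem abs_sum_mul_le_sum_abs_of_abs_le_one {ι : Type*} (s : Finset ι) (a c : ι → ℝ)
    (hc : ∀ j ∈ s, |c j| ≤ 1) : |∑ j ∈ s, a j * c j| ≤ ∑ j ∈ s, |a j| :=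
  (abs_sum_le_sum_abs _ _).trans <| sum_le_sum fun j hj => by
    rw [abs_mul]
    exact mul_le_of_le_one_right (abs_nonneg _) (hc j hj)

section Relaxation

variable {v v' : ℝ → ℝ} {τ C a b : ℝ}

theorem image_le_of_mul_deriv_add_self_le (hτ : 0 < τ) (hv : ContinuousOn v (Icc a b))
    (hv' : ∀ s ∈ Ioo a b, HasDerivAt v (v' s) s) (hbound : ∀ s ∈ Ioo a b, τ * v' s + v s ≤ C)
    (ha : v a ≤ C) : ∀ t ∈ Icc a b, v t ≤ C := by
  intro t ht
  set ψ : ℝ → ℝ := fun s => Real.exp (s / τ) * (v s - C)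
  have hψ' : ∀ s ∈ Ioo a b,
      HasDerivAt ψ (Real.exp (s / τ) / τ * (τ * v' s + v s - C)) s := by
    intro s hs
    refine (((hasDerivAt_id' s).div_const τ).exp.mul ((hv' s hs).sub_const C)).congr_deriv ?_
    field_simp
    ring
  have hψ_anti : AntitoneOn ψ (Icc a b) := by
    refine antitoneOn_of_deriv_nonpos (convex_Icc a b) ?_ ?_ ?_
    · exact (Real.continuous_exp.comp (continuous_id.div_const τ)).continuousOn.mul
        (hv.sub continuousOn_const)
    · rw [interior_Icc]
      exact fun s hs => (hψ' s hs).differentiableAt.differentiableWithinAt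
    · rw [interior_Icc]
      intro s hs
      rw [(hψ' s hs).deriv]
      exact mul_nonpos_of_nonneg_of_nonpos (by positivity) (by linarith [hbound s hs])
  have hψt : ψ t ≤ 0 := (hψ_anti ⟨le_rfl, ht.1.trans ht.2⟩ ht ht.1).trans <|
    mul_nonpos_of_nonneg_of_nonpos (Real.exp_pos _).le (by linarith)
  linarith [nonpos_of_mul_nonpos_right hψt (Real.exp_pos (t / τ))]

theorem abs_le_of_abs_mul_deriv_add_self_le (hτ : 0 < τ) (hv : ContinuousOn v (Icc a b))
    (hv' : ∀ s ∈ Ioo a b, HasDerivAt v (v' s) s) (hbound : ∀ s ∈ Ioo a b, |τ * v' s + v s| ≤ C)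
    (ha : |v a| ≤ C) : ∀ t ∈ Icc a b, |v t| ≤ C := by
  intro t ht
  have hupper := image_le_of_mul_deriv_add_self_le hτ hv hv'
    (fun s hs => (abs_le.mp (hbound s hs)).2) (abs_le.mp ha).2 t ht
  have hlower := image_le_of_mul_deriv_add_self_le (v := fun s => -v s)
    (v' := fun s => -v' s) (C := C) hτ hv.neg
    (fun s hs => (hv' s hs).neg) (fun s hs => by linarith [(abs_le.mp (hbound s hs)).1])
    (by linarith [(abs_le.mp ha).1]) t ht
  exact abs_le.mpr ⟨by linarith [show -v t ≤ C from hlower], hupper⟩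

theorem abs_mul_deriv_le_of_abs_mul_deriv_add_self_le {K : ℝ} (hτ : 0 < τ)
    (hv : ContinuousOn v (Icc a b)) (hv' : ∀ s ∈ Ioo a b, HasDerivAt v (v' s) s)
    (hbound : ∀ s ∈ Ioc a b, |τ * v' s + v s| ≤ K) : ∀ t ∈ Ioc a b, |τ * v' t| ≤ |v a| + 2 * K := by
  intro t ht
  have hK : 0 ≤ K := (abs_nonneg _).trans (hbound t ht)
  have hvt : |v t| ≤ |v a| + K := abs_le_of_abs_mul_deriv_add_self_le hτ hv hv'
    (fun s hs => (hbound s (Ioo_subset_Ioc_self hs)).trans (le_add_of_nonneg_left (abs_nonneg _)))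
    (le_add_of_nonneg_right hK) t (Ioc_subset_Icc_self ht)
  calc |τ * v' t| = |(τ * v' t + v t) - v t| := by rw [add_sub_cancel_right]
    _ ≤ |τ * v' t + v t| + |v t| := abs_sub _ _
    _ ≤ |v a| + 2 * K := by linarith [hbound t ht]

end Relaxation

theorem stmt_1_general
    (N : ℕ) [NeZero N] (T : ℝ)
    (τ : Fin N → ℝ) (hτ : ∀ i, 0 < τ i)
    (ω : Fin N → Fin N → ℝ) (uθ : ℝ) (uinit : Fin N → ℝ)
    (S : ℝ → ℝ) (hS : ∀ x, S x ∈ Set.Icc (0:ℝ) 1)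
    (q : ℝ → Fin N → ℝ)
    (B : ℝ) (hqB : ∀ t ∈ Set.Icc (0:ℝ) T, ∀ i, |q t i| ≤ B)
    (u u' : ℝ → Fin N → ℝ)
    (hderiv : ∀ t ∈ Set.Icc (0:ℝ) T, HasDerivWithinAt u (u' t) (Set.Icc 0 T) t)
    (hinit : u 0 = uinit)
    (hODE : ∀ t ∈ Set.Ioc (0:ℝ) T, ∀ i,
      τ i * u' t i = -u t i + (∑ j, ω i j * S (u t j - uθ)) + q t i) :
    ∀ t ∈ Set.Ioc (0:ℝ) T, ∀ i, |u' t i| ≤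
      (Finset.univ.inf' Finset.univ_nonempty τ)⁻¹ *
      ((Finset.univ.sup' Finset.univ_nonempty fun i => |uinit i|)
        + 2 * (Finset.univ.sup' Finset.univ_nonempty fun i => ∑ j, |ω i j|) + 2 * B) := by
  intro t ht i
  have hforcing : ∀ s ∈ Ioc 0 T, |τ i * u' s i + u s i| ≤ ∑ j, |ω i j| + B := by
    intro s hs
    have hS' : ∀ j, |S (u s j - uθ)| ≤ 1 := fun j =>
      abs_le.mpr ⟨by linarith [(hS (u s j - uθ)).1], (hS _).2⟩
    have hrelax : τ i * u' s i + u s i = (∑ j, ω i j * S (u s j - uθ)) + q s i := by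
      rw [hODE s hs i]
      ring
    rw [hrelax]
    exact (abs_add_le _ _).trans <| add_le_add
      (abs_sum_mul_le_sum_abs_of_abs_le_one _ _ _ fun j _ => hS' j)
      (hqB s (Ioc_subset_Icc_self hs) i)
  have hui' : ∀ s ∈ Ioo 0 T, HasDerivAt (fun r => u r i) (u' s i) s := fun s hs =>
    hasDerivAt_pi.mp ((hderiv s (Ioo_subset_Icc_self hs)).hasDerivAt (Icc_mem_nhds hs.1 hs.2)) i
  have hui : ContinuousOn (fun s => u s i) (Icc 0 T) :=
    (continuous_apply i).comp_continuousOn fun s hs => (hderiv s hs).continuousWithinAt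
  have hτu' := abs_mul_deriv_le_of_abs_mul_deriv_add_self_le (hτ i) hui hui' hforcing t ht
  rw [hinit] at hτu'
  have hB : 0 ≤ B := (abs_nonneg _).trans (hqB t (Ioc_subset_Icc_self ht) i)
  have hτmin : 0 < univ.inf' univ_nonempty τ := (lt_inf'_iff _).mpr fun j _ => hτ j
  calc |u' t i| = |τ i * u' t i| / τ i := by
        rw [abs_mul, abs_of_pos (hτ i), mul_div_cancel_left₀ _ (hτ i).ne']
    _ ≤ (|uinit i| + 2 * (∑ j, |ω i j| + B)) / τ i := div_le_div_of_nonneg_right hτu' (hτ i).le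
    _ ≤ ((univ.sup' univ_nonempty fun i => |uinit i|)
          + 2 * (univ.sup' univ_nonempty fun i => ∑ j, |ω i j|) + 2 * B)
          / univ.inf' univ_nonempty τ := by
        have hM := le_sup' (fun i => |uinit i|) (mem_univ i)
        have hW := le_sup' (fun i => ∑ j, |ω i j|) (mem_univ i)
        have hτi := inf'_le τ (mem_univ i)
        rw [mul_add, ← add_assoc]
        gcongr
        linarith [abs_nonneg (uinit i),
          sum_nonneg fun j (_ : j ∈ Finset.univ) => abs_nonneg (ω i j)]
    _ = _ := div_eq_inv_mul _ _

theorem stmt_1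
    (N : ℕ) [NeZero N] (T : ℝ) (hT : 0 < T)
    (τ : Fin N → ℝ) (hτ : ∀ i, 0 < τ i)
    (ω : Fin N → Fin N → ℝ) (uθ : ℝ) (uinit : Fin N → ℝ)
    (S : ℝ → ℝ) (hS : ∀ x, S x ∈ Set.Icc (0:ℝ) 1)
    (q : ℝ → Fin N → ℝ) (hq_cont : ContinuousOn q (Set.Icc 0 T))
    (B : ℝ) (hB : 0 ≤ B) (hqB : ∀ t ∈ Set.Icc (0:ℝ) T, ∀ i, |q t i| ≤ B)
    (u u' : ℝ → Fin N → ℝ)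
    (hderiv : ∀ t ∈ Set.Icc (0:ℝ) T, HasDerivWithinAt u (u' t) (Set.Icc 0 T) t)
    (hinit : u 0 = uinit)
    (hODE : ∀ t ∈ Set.Ioc (0:ℝ) T, ∀ i,
      τ i * u' t i = -u t i + (∑ j, ω i j * S (u t j - uθ)) + q t i) :
    ∀ t ∈ Set.Ioc (0:ℝ) T, ∀ i, |u' t i| ≤
      (Finset.univ.inf' Finset.univ_nonempty τ)⁻¹ *
      ((Finset.univ.sup' Finset.univ_nonempty fun i => |uinit i|)
        + 2 * (Finset.univ.sup' Finset.univ_nonempty fun i => ∑ j, |ω i j|) + 2 * B) :=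
  stmt_1_general N T τ hτ ω uθ uinit S hS q B hqB u u' hderiv hinit hODE
end

section
/- Let u : [0,T] → ℝ^N be differentiable with u(0) = u_init and satisfy τ_i u_i'(t) = -u_i(t) + Σ_{j=1}^N ω_{ij} S(u_j(t) - u_θ) + q_i(t) for all t ∈ (0,T] and all i = 1,…,N, where 0 ≤ S(x) ≤ 1 for all x ∈ ℝ, each τ_i > 0, and |q_i(t)| ≤ B for all i and all t ∈ [0,T]. Then u is Lipschitz continuous on [0,T] with the constant L = (min_{1≤i≤N} τ_i)^{-1} · ( max_{1≤i≤N} |u_{init,i}| + 2 max_{1≤i≤N} Σ_{j=1}^N |ω_{ij}| + 2B ), i.e. max_{1≤i≤N} |u_i(t) - u_i(s)| ≤ L |t - s| for all s, t ∈ [0,T]; in particular L does not depend on the choice of S or q, only on the bound B. -/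
open Set Finset Filter MeasureTheory

theorem stmt_2
    (N : ℕ) [NeZero N] (T : ℝ) (hT : 0 < T)
    (τ : Fin N → ℝ) (hτ : ∀ i, 0 < τ i)
    (ω : Fin N → Fin N → ℝ) (uθ : ℝ) (uinit : Fin N → ℝ)
    (S : ℝ → ℝ) (hS : ∀ x, S x ∈ Set.Icc (0:ℝ) 1)
    (q : ℝ → Fin N → ℝ) (hq_cont : ContinuousOn q (Set.Icc 0 T))
    (B : ℝ) (hB : 0 ≤ B) (hqB : ∀ t ∈ Set.Icc (0:ℝ) T, ∀ i, |q t i| ≤ B)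
    (u u' : ℝ → Fin N → ℝ)
    (hderiv : ∀ t ∈ Set.Icc (0:ℝ) T, HasDerivWithinAt u (u' t) (Set.Icc 0 T) t)
    (hinit : u 0 = uinit)
    (hODE : ∀ t ∈ Set.Ioc (0:ℝ) T, ∀ i,
      τ i * u' t i = -u t i + (∑ j, ω i j * S (u t j - uθ)) + q t i) :
    ∀ s ∈ Set.Icc (0:ℝ) T, ∀ t ∈ Set.Icc (0:ℝ) T, ∀ i,
      |u t i - u s i| ≤
        ((Finset.univ.inf' Finset.univ_nonempty τ)⁻¹ *
          ((Finset.univ.sup' Finset.univ_nonempty fun i => |uinit i|)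
            + 2 * (Finset.univ.sup' Finset.univ_nonempty fun i => ∑ j, |ω i j|) + 2 * B))
        * |t - s| := by
  set τm := (Finset.univ.inf' Finset.univ_nonempty τ) with hτm_def
  set M0 := (Finset.univ.sup' Finset.univ_nonempty fun i => |uinit i|) with hM0_def
  set Kω := (Finset.univ.sup' Finset.univ_nonempty fun i => ∑ j, |ω i j|) with hKω_def
  have i0 : Fin N := ⟨0, Nat.pos_of_ne_zero (NeZero.ne N)⟩
  have hτm : 0 < τm := by
    rw [hτm_def, Finset.lt_inf'_iff]; exact fun i _ => hτ i
  have hτm_le : ∀ i, τm ≤ τ i := fun i => by rw [hτm_def]; exact Finset.inf'_le _ (Finset.mem_univ i)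
  have hM0 : ∀ i, |uinit i| ≤ M0 := fun i => by rw [hM0_def]; exact Finset.le_sup' (fun i => |uinit i|) (Finset.mem_univ i)
  have hM00 : 0 ≤ M0 := le_trans (abs_nonneg _) (hM0 i0)
  have hKω : ∀ i, (∑ j, |ω i j|) ≤ Kω := fun i => by rw [hKω_def]; exact Finset.le_sup' (fun i => ∑ j, |ω i j|) (Finset.mem_univ i)
  have hKω0 : 0 ≤ Kω := le_trans (Finset.sum_nonneg fun j _ => abs_nonneg _) (hKω i0)
  set K := Kω + B with hK_def
  set C := M0 + K with hC_def
  -- componentwise derivatives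
  have hd : ∀ i, ∀ t ∈ Set.Icc (0:ℝ) T, HasDerivWithinAt (fun s => u s i) (u' t i)
      (Set.Icc 0 T) t := fun i t ht =>
    (ContinuousLinearMap.proj (R := ℝ) (φ := fun _ : Fin N => ℝ) i).hasFDerivAt.comp_hasDerivWithinAt t
      (hderiv t ht)
  have hcont : ∀ i, ContinuousOn (fun s => u s i) (Set.Icc 0 T) :=
    fun i t ht => (hd i t ht).continuousWithinAt
  -- bound on the source term
  have hg : ∀ t ∈ Set.Ioc (0:ℝ) T, ∀ i, |(∑ j, ω i j * S (u t j - uθ)) + q t i| ≤ K := by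
    intro t ht i
    have h1 : |∑ j, ω i j * S (u t j - uθ)| ≤ ∑ j, |ω i j| := by
      refine (Finset.abs_sum_le_sum_abs _ _).trans (Finset.sum_le_sum fun j _ => ?_)
      rw [abs_mul]
      rcases hS (u t j - uθ) with ⟨h0, h1⟩
      calc |ω i j| * |S (u t j - uθ)| ≤ |ω i j| * 1 := by
            refine mul_le_mul_of_nonneg_left ?_ (abs_nonneg _)
            rw [abs_of_nonneg h0]; exact h1
        _ = |ω i j| := mul_one _
    have h2 := hqB t (Set.Ioc_subset_Icc_self ht) i
    calc |(∑ j, ω i j * S (u t j - uθ)) + q t i|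
        ≤ |∑ j, ω i j * S (u t j - uθ)| + |q t i| := abs_add_le _ _
      _ ≤ Kω + B := add_le_add (h1.trans (hKω i)) h2
  -- Step A : |u t i| ≤ C on [0,T]
  have hbound : ∀ t ∈ Set.Icc (0:ℝ) T, ∀ i, |u t i| ≤ C := by
    have key : ∀ (σ : ℝ), (σ = 1 ∨ σ = -1) → ∀ i, ∀ t ∈ Set.Icc (0:ℝ) T,
        σ * u t i ≤ C := by
      intro σ hσ i t ht
      have hanti : AntitoneOn (fun s => Real.exp (s / τ i) * (σ * u s i - K))
          (Set.Icc 0 T) := by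
        apply antitoneOn_of_hasDerivWithinAt_nonpos (convex_Icc 0 T)
          (f' := fun x => Real.exp (x / τ i) * (1 / τ i) * (σ * u x i - K)
            + Real.exp (x / τ i) * (σ * u' x i))
        · exact ((Real.continuous_exp.comp (continuous_id.div_const _)).continuousOn).mul
            ((continuousOn_const.mul (hcont i)).sub continuousOn_const)
        · intro x hx
          rw [interior_Icc] at hx
          have hxI : x ∈ Set.Icc (0:ℝ) T := Set.Ioo_subset_Icc_self hx
          have hu : HasDerivAt (fun s => u s i) (u' x i) x :=
            (hd i x hxI).hasDerivAt (Icc_mem_nhds hx.1 hx.2)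
          have he : HasDerivAt (fun s => Real.exp (s / τ i))
              (Real.exp (x / τ i) * (1 / τ i)) x := by
            exact ((Real.hasDerivAt_exp (x / τ i)).comp x
              ((hasDerivAt_id x).div_const (τ i))).congr_deriv (g' := Real.exp (x / τ i) * (1 / τ i)) (by simp)
          have hu2 : HasDerivAt (fun s => σ * u s i - K) (σ * u' x i) x :=
            (hu.const_mul σ).sub_const K
          exact (he.mul hu2).hasDerivWithinAt
        · intro x hx
          rw [interior_Icc] at hx
          have hx' : x ∈ Set.Ioc (0:ℝ) T := ⟨hx.1, hx.2.le⟩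
          have hODEx := hODE x hx' i
          have hgx := hg x hx' i
          set g := (∑ j, ω i j * S (u x j - uθ)) + q x i with hg_def
          have hσg : σ * g ≤ K := by
            have habs := abs_le.1 hgx
            rcases hσ with h | h
            · rw [h, one_mul]; exact habs.2
            · rw [h, neg_one_mul]; linarith [habs.1]
          have hτi : 0 < τ i := hτ i
          have hexp : 0 < Real.exp (x / τ i) := Real.exp_pos _
          have hτu' : τ i * (σ * u' x i) = -(σ * u x i) + σ * g :=
            calc τ i * (σ * u' x i) = σ * (τ i * u' x i) := by ring
              _ = σ * (-u x i + (∑ j, ω i j * S (u x j - uθ)) + q x i) := by rw [hODEx]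
              _ = -(σ * u x i) + σ * g := by rw [hg_def]; ring
          have : Real.exp (x / τ i) * (1 / τ i) * (σ * u x i - K)
              + Real.exp (x / τ i) * (σ * u' x i)
              = Real.exp (x / τ i) * (1 / τ i) * (σ * g - K) := by
            have hu'' : σ * u' x i = (-(σ * u x i) + σ * g) / τ i :=
              eq_div_of_mul_eq hτi.ne' (by rw [mul_comm]; exact hτu')
            rw [hu'']; ring
          rw [this]
          have hgK : σ * g - K ≤ 0 := by linarith
          have hEτ : 0 ≤ Real.exp (x / τ i) * (1 / τ i) := by positivity
          exact mul_nonpos_of_nonneg_of_nonpos hEτ hgK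
      have h0I : (0:ℝ) ∈ Set.Icc (0:ℝ) T := ⟨le_refl _, hT.le⟩
      have := hanti h0I ht ht.1
      simp only [zero_div, Real.exp_zero, one_mul, hinit] at this
      have hσu0 : σ * uinit i ≤ M0 := by
        have habs := abs_le.1 (hM0 i)
        rcases hσ with h | h
        · rw [h, one_mul]; exact habs.2
        · rw [h, neg_one_mul]; linarith [habs.1]
      have hexp1 : 1 ≤ Real.exp (t / τ i) := by
        apply Real.one_le_exp; exact div_nonneg ht.1 (hτ i).le
      nlinarith [Real.exp_pos (t / τ i)]
    intro t ht i
    rw [abs_le]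
    constructor
    · have := key (-1) (Or.inr rfl) i t ht; linarith
    · have := key 1 (Or.inl rfl) i t ht; linarith
  -- Step B : derivative bound on the interior
  set D := M0 + 2 * Kω + 2 * B with hD_def
  set L := τm⁻¹ * D with hL_def
  have hCK : C + K = D := by rw [hC_def, hK_def, hD_def]; ring
  have hL' : ∀ x ∈ Set.Ioo (0:ℝ) T, ∀ i, |u' x i| ≤ L := by
    intro x hx i
    have hx' : x ∈ Set.Ioc (0:ℝ) T := ⟨hx.1, hx.2.le⟩
    have hODEx := hODE x hx' i
    have hgx := hg x hx' i
    have hux := hbound x (Set.Ioo_subset_Icc_self hx) i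
    have hτi : 0 < τ i := hτ i
    have h1 : |τ i * u' x i| ≤ D := by
      rw [hODEx, add_assoc]
      calc |(-u x i) + ((∑ j, ω i j * S (u x j - uθ)) + q x i)|
          ≤ |(-u x i)| + |(∑ j, ω i j * S (u x j - uθ)) + q x i| := abs_add_le _ _
        _ ≤ C + K := by rw [abs_neg]; exact add_le_add hux hgx
        _ = D := hCK
    rw [abs_mul, abs_of_pos hτi] at h1
    have h2 : τm * |u' x i| ≤ D := le_trans
      (mul_le_mul_of_nonneg_right (hτm_le i) (abs_nonneg _)) h1
    rw [hL_def]
    rw [inv_mul_eq_div, le_div_iff₀ hτm, mul_comm]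
    exact h2
  -- Step C : Lipschitz via monotonicity
  have hmono : ∀ (σ : ℝ), (σ = 1 ∨ σ = -1) → ∀ i,
      MonotoneOn (fun s => L * s + σ * u s i) (Set.Icc 0 T) := by
    intro σ hσ i
    apply monotoneOn_of_hasDerivWithinAt_nonneg (convex_Icc 0 T)
      (f' := fun x => L + σ * u' x i)
    · exact ((continuous_const.mul continuous_id).continuousOn).add (continuousOn_const.mul (hcont i))
    · intro x hx
      rw [interior_Icc] at hx
      have hu : HasDerivAt (fun s => u s i) (u' x i) x :=
        (hd i x (Set.Ioo_subset_Icc_self hx)).hasDerivAt (Icc_mem_nhds hx.1 hx.2)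
      have := (((hasDerivAt_id x).const_mul L).add (hu.const_mul σ)).hasDerivWithinAt
        (s := Set.Ioo 0 T)
      rw [interior_Icc]; exact this.congr_deriv (g' := L + σ * u' x i) (by simp)
    · intro x hx
      rw [interior_Icc] at hx
      have habs := abs_le.1 (hL' x hx i)
      rcases hσ with h | h
      · rw [h, one_mul]; linarith [habs.1]
      · rw [h, neg_one_mul]; linarith [habs.2]
  intro s hs t ht i
  have h1 := hmono 1 (Or.inl rfl) i
  have h2 := hmono (-1) (Or.inr rfl) i
  rcases le_total s t with hst | hst
  · rw [abs_of_nonneg (sub_nonneg.2 hst), abs_le]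
    have a1 := h1 hs ht hst
    have a2 := h2 hs ht hst
    simp only [one_mul, neg_one_mul] at a1 a2
    constructor <;> nlinarith
  · rw [abs_of_nonpos (sub_nonpos.2 hst), abs_le]
    have a1 := h1 ht hs hst
    have a2 := h2 ht hs hst
    simp only [one_mul, neg_one_mul] at a1 a2
    constructor <;> nlinarith
end

section
/- For each β ∈ ℕ let u_β : [0,T] → ℝ^N be differentiable with u_β(0) = u_init and satisfy τ_i u_{β,i}'(t) = -u_{β,i}(t) + Σ_{j=1}^N ω_{ij} S_β(u_{β,j}(t) - u_θ) + q_{β,i}(t) for all t ∈ (0,T] and all i, where each τ_i > 0, 0 ≤ S_β(x) ≤ 1 for all x ∈ ℝ and all β, each q_β is continuous, and sup_{β ∈ ℕ, t ∈ [0,T]} max_i |q_{β,i}(t)| ≤ B < ∞. Then there exist a strictly increasing sequence of indices β_1 < β_2 < β_3 < … and a continuous function v : [0,T] → ℝ^N such that u_{β_k} converges to v uniformly on [0,T] as k → ∞. -/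
open Set Finset Filter MeasureTheory
open Set Filter Topology

lemma dist_le_mul_closure {E : Type*} [PseudoMetricSpace E] {f : ℝ → E} {s : Set ℝ} {C : ℝ}
    (hcont : ContinuousOn f (closure s))
    (h : ∀ x ∈ s, ∀ y ∈ s, dist (f x) (f y) ≤ C * dist x y) :
    ∀ x ∈ closure s, ∀ y ∈ closure s, dist (f x) (f y) ≤ C * dist x y := by
  have step1 : ∀ y ∈ s, ∀ x ∈ closure s, dist (f x) (f y) ≤ C * dist x y := by
    intro y hy x hx
    haveI hne : (𝓝[s] x).NeBot := mem_closure_iff_nhdsWithin_neBot.mp hx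
    have h1 : Tendsto (fun z => dist (f z) (f y)) (𝓝[s] x) (𝓝 (dist (f x) (f y))) :=
      ((hcont x hx).mono subset_closure).dist tendsto_const_nhds
    have h2 : Tendsto (fun z => C * dist z y) (𝓝[s] x) (𝓝 (C * dist x y)) :=
      (tendsto_const_nhds.mul (tendsto_id.dist tendsto_const_nhds)).mono_left nhdsWithin_le_nhds
    exact le_of_tendsto_of_tendsto h1 h2
      (Filter.eventually_of_mem self_mem_nhdsWithin (fun z hz => h z hz y hy))
  intro x hx y hy
  haveI hne : (𝓝[s] y).NeBot := mem_closure_iff_nhdsWithin_neBot.mp hy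
  have h1 : Tendsto (fun z => dist (f x) (f z)) (𝓝[s] y) (𝓝 (dist (f x) (f y))) :=
    tendsto_const_nhds.dist ((hcont y hy).mono subset_closure)
  have h2 : Tendsto (fun z => C * dist x z) (𝓝[s] y) (𝓝 (C * dist x y)) :=
    (tendsto_const_nhds.mul (tendsto_const_nhds.dist tendsto_id)).mono_left nhdsWithin_le_nhds
  refine le_of_tendsto_of_tendsto h1 h2
    (Filter.eventually_of_mem self_mem_nhdsWithin (fun z hz => ?_))
  show dist (f x) (f z) ≤ C * dist x z
  exact step1 z hz x hx

theorem stmt_3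
    (N : ℕ) [NeZero N] (T : ℝ) (hT : 0 < T)
    (τ : Fin N → ℝ) (hτ : ∀ i, 0 < τ i)
    (ω : Fin N → Fin N → ℝ) (uθ : ℝ) (uinit : Fin N → ℝ)
    (S : ℕ → ℝ → ℝ) (hS : ∀ β x, S β x ∈ Set.Icc (0:ℝ) 1)
    (q : ℕ → ℝ → Fin N → ℝ) (hq_cont : ∀ β, ContinuousOn (q β) (Set.Icc 0 T))
    (B : ℝ) (hB : 0 ≤ B) (hqB : ∀ β, ∀ t ∈ Set.Icc (0:ℝ) T, ∀ i, |q β t i| ≤ B)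
    (u u' : ℕ → ℝ → Fin N → ℝ)
    (hderiv : ∀ β, ∀ t ∈ Set.Icc (0:ℝ) T,
      HasDerivWithinAt (u β) (u' β t) (Set.Icc 0 T) t)
    (hinit : ∀ β, u β 0 = uinit)
    (hODE : ∀ β, ∀ t ∈ Set.Ioc (0:ℝ) T, ∀ i,
      τ i * u' β t i = -u β t i + (∑ j, ω i j * S β (u β t j - uθ)) + q β t i) :
    ∃ φ : ℕ → ℕ, StrictMono φ ∧ ∃ v : ℝ → Fin N → ℝ,
      ContinuousOn v (Set.Icc 0 T) ∧
      TendstoUniformlyOn (fun k => u (φ k)) v Filter.atTop (Set.Icc 0 T) := by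
  have hclos : closure (Set.Ioc (0:ℝ) T) = Set.Icc 0 T := closure_Ioc hT.ne
  have hu_cont : ∀ β, ContinuousOn (u β) (Set.Icc 0 T) :=
    fun β t ht => (hderiv β t ht).continuousWithinAt
  -- the forcing term and its bound
  set w : ℕ → ℝ → Fin N → ℝ :=
    fun β t i => (∑ j, ω i j * S β (u β t j - uθ)) + q β t i with hw_def
  set M : Fin N → ℝ := fun i => (∑ j, |ω i j|) + B with hM_def
  have hM0 : ∀ i, 0 ≤ M i := fun i =>
    add_nonneg (Finset.sum_nonneg fun j _ => abs_nonneg _) hB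
  have hw : ∀ β, ∀ t ∈ Set.Icc (0:ℝ) T, ∀ i, |w β t i| ≤ M i := by
    intro β t ht i
    refine (abs_add_le _ _).trans (add_le_add ?_ (hqB β t ht i))
    refine (Finset.abs_sum_le_sum_abs _ _).trans (Finset.sum_le_sum fun j _ => ?_)
    rw [abs_mul]
    calc |ω i j| * |S β (u β t j - uθ)| ≤ |ω i j| * 1 := by
          apply mul_le_mul_of_nonneg_left _ (abs_nonneg _)
          rw [abs_of_nonneg (hS β _).1]; exact (hS β _).2
      _ = |ω i j| := mul_one _
  -- solve the ODE for u'
  have hODE' : ∀ β, ∀ t ∈ Set.Ioc (0:ℝ) T, ∀ i,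
      u' β t i = (-u β t i + w β t i) / τ i := by
    intro β t ht i
    have h := hODE β t ht i
    have hτ' := (hτ i).ne'
    field_simp [hw_def]
    linarith [h]
  -- a priori bound on u
  set Cc : Fin N → ℝ := fun i => Real.exp (T / τ i) * M i / τ i with hCc_def
  have hCc0 : ∀ i, 0 ≤ Cc i := fun i =>
    div_nonneg (mul_nonneg (Real.exp_pos _).le (hM0 i)) (hτ i).le
  set R : Fin N → ℝ := fun i => |uinit i| + Cc i * T with hR_def
  have hR0 : ∀ i, 0 ≤ R i := fun i =>
    add_nonneg (abs_nonneg _) (mul_nonneg (hCc0 i) hT.le)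
  have hRb : ∀ β, ∀ t ∈ Set.Icc (0:ℝ) T, ∀ i, |u β t i| ≤ R i := by
    intro β t ht i
    set h : ℝ → ℝ := fun s => Real.exp (s / τ i) * u β s i with hh_def
    have hcont : ContinuousOn h (Set.Icc 0 T) :=
      ((Real.continuous_exp.comp (continuous_id.div_const _)).continuousOn).mul
        ((continuous_apply i).comp_continuousOn (hu_cont β))
    have hderiv_h : ∀ s ∈ Set.Ioc (0:ℝ) T,
        HasDerivWithinAt h (Real.exp (s / τ i) * w β s i / τ i) (Set.Ioc 0 T) s := by
      intro s hs
      have hui : HasDerivWithinAt (fun r => u β r i) (u' β s i) (Set.Ioc 0 T) s :=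
        hasDerivWithinAt_pi.1 ((hderiv β s (Set.Ioc_subset_Icc_self hs)).mono
          Set.Ioc_subset_Icc_self) i
      have hexp : HasDerivWithinAt (fun r => Real.exp (r / τ i))
          (Real.exp (s / τ i) * (1 / τ i)) (Set.Ioc 0 T) s :=
        (((hasDerivAt_id s).div_const (τ i)).exp).hasDerivWithinAt
      have hmul := hexp.mul hui
      refine hmul.congr_deriv ?_
      rw [hODE' β s hs i]
      have hτ' := (hτ i).ne'
      field_simp
      ring
    have hbound : ∀ s ∈ Set.Ioc (0:ℝ) T,
        ‖Real.exp (s / τ i) * w β s i / τ i‖ ≤ Cc i := by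
      intro s hs
      rw [Real.norm_eq_abs, abs_div, abs_of_pos (hτ i), abs_mul,
        abs_of_pos (Real.exp_pos _), hCc_def]
      have h1 : Real.exp (s / τ i) ≤ Real.exp (T / τ i) := by
        rw [Real.exp_le_exp]
        gcongr
        · exact (hτ i).le
        · exact hs.2
      have h2 : |w β s i| ≤ M i := hw β s (Set.Ioc_subset_Icc_self hs) i
      have h3 := mul_le_mul h1 h2 (abs_nonneg _) (Real.exp_pos _).le
      exact div_le_div_of_nonneg_right h3 (hτ i).le
    have key := dist_le_mul_closure (s := Set.Ioc 0 T) (C := Cc i)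
      (by rw [hclos]; exact hcont)
      (fun x hx y hy => by
        rw [Real.dist_eq, Real.dist_eq, ← Real.norm_eq_abs, ← Real.norm_eq_abs]
        exact Convex.norm_image_sub_le_of_norm_hasDerivWithin_le hderiv_h hbound
          (convex_Ioc 0 T) hy hx)
    rw [hclos] at key
    have h0 : h 0 = uinit i := by simp [hh_def, hinit β]
    have hb2 : |h t - h 0| ≤ Cc i * T := by
      have hk := key t ht 0 (Set.left_mem_Icc.2 hT.le)
      rw [Real.dist_eq, Real.dist_eq, sub_zero, abs_of_nonneg ht.1] at hk
      exact hk.trans (mul_le_mul_of_nonneg_left ht.2 (hCc0 i))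
    have hexp1 : 1 ≤ Real.exp (t / τ i) := Real.one_le_exp (div_nonneg ht.1 (hτ i).le)
    have hle : |u β t i| ≤ |h t| := by
      rw [hh_def]
      show |u β t i| ≤ |Real.exp (t / τ i) * u β t i|
      rw [abs_mul, abs_of_pos (Real.exp_pos _)]
      exact le_mul_of_one_le_left (abs_nonneg _) hexp1
    have hfin : |h t| ≤ |uinit i| + Cc i * T := by
      have h4 := abs_sub_abs_le_abs_sub (h t) (h 0)
      rw [h0] at h4 hb2
      linarith
    exact hle.trans hfin
  -- uniform Lipschitz and sup bounds
  set L : ℝ := ∑ i, (R i + M i) / τ i with hL_def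
  have hLi0 : ∀ i : Fin N, 0 ≤ (R i + M i) / τ i := fun i =>
    div_nonneg (add_nonneg (hR0 i) (hM0 i)) (hτ i).le
  have hL0 : 0 ≤ L := Finset.sum_nonneg fun i _ => hLi0 i
  have hu'b : ∀ β, ∀ t ∈ Set.Ioc (0:ℝ) T, ‖u' β t‖ ≤ L := by
    intro β t ht
    rw [pi_norm_le_iff_of_nonneg hL0]
    intro i
    rw [Real.norm_eq_abs, hODE' β t ht i]
    have h1 : |(-u β t i + w β t i) / τ i| ≤ (R i + M i) / τ i := by
      rw [abs_div, abs_of_pos (hτ i)]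
      apply div_le_div_of_nonneg_right _ (hτ i).le
      refine (abs_add_le _ _).trans (add_le_add ?_ (hw β t (Set.Ioc_subset_Icc_self ht) i))
      rw [abs_neg]; exact hRb β t (Set.Ioc_subset_Icc_self ht) i
    exact h1.trans (Finset.single_le_sum (fun i _ => hLi0 i) (Finset.mem_univ i))
  have hlip : ∀ β, ∀ x ∈ Set.Icc (0:ℝ) T, ∀ y ∈ Set.Icc (0:ℝ) T,
      dist (u β x) (u β y) ≤ L * dist x y := by
    intro β
    have key := dist_le_mul_closure (s := Set.Ioc 0 T) (C := L)
      (by rw [hclos]; exact hu_cont β)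
      (fun x hx y hy => by
        rw [dist_eq_norm, Real.dist_eq, ← Real.norm_eq_abs]
        exact Convex.norm_image_sub_le_of_norm_hasDerivWithin_le
          (fun s hs => (hderiv β s (Set.Ioc_subset_Icc_self hs)).mono Set.Ioc_subset_Icc_self)
          (fun s hs => hu'b β s hs) (convex_Ioc 0 T) hy hx)
    rw [hclos] at key
    exact key
  set R' : ℝ := ∑ i, R i with hR'_def
  have hR'0 : 0 ≤ R' := Finset.sum_nonneg fun i _ => hR0 i
  have hub : ∀ β, ∀ t ∈ Set.Icc (0:ℝ) T, ‖u β t‖ ≤ R' := by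
    intro β t ht
    rw [pi_norm_le_iff_of_nonneg hR'0]
    intro i
    rw [Real.norm_eq_abs]
    exact (hRb β t ht i).trans (Finset.single_le_sum (fun i _ => hR0 i) (Finset.mem_univ i))
  -- Arzelà–Ascoli
  let F : ℕ → BoundedContinuousFunction (Set.Icc (0:ℝ) T) (Fin N → ℝ) := fun β =>
    BoundedContinuousFunction.mkOfCompact ⟨(Set.Icc (0:ℝ) T).restrict (u β), (hu_cont β).restrict⟩
  have hFA : IsCompact (closure (Set.range F)) := by
    apply BoundedContinuousFunction.arzela_ascoli (Metric.closedBall 0 R')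
      (isCompact_closedBall _ _)
    · rintro f x ⟨β, rfl⟩
      rw [Metric.mem_closedBall, dist_zero_right]
      exact hub β x x.2
    · intro x₀
      rw [Metric.equicontinuousAt_iff]
      intro ε hε
      refine ⟨ε / (L + 1), by positivity, fun x hx i => ?_⟩
      obtain ⟨_, β, rfl⟩ := i
      show dist (u β x₀) (u β x) < ε
      have hd : dist (x₀ : ℝ) (x : ℝ) ≤ ε / (L + 1) := by
        rw [Subtype.dist_eq, dist_comm] at hx
        exact hx.le
      calc dist (u β x₀) (u β x) ≤ L * dist (x₀ : ℝ) (x : ℝ) := hlip β x₀ x₀.2 x x.2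
        _ ≤ L * (ε / (L + 1)) := mul_le_mul_of_nonneg_left hd hL0
        _ < (L + 1) * (ε / (L + 1)) := by
            apply mul_lt_mul_of_pos_right (by linarith) (by positivity)
        _ = ε := by field_simp
  haveI : FirstCountableTopology (BoundedContinuousFunction (Set.Icc (0:ℝ) T) (Fin N → ℝ)) := by
    set_option synthInstance.maxHeartbeats 1000000 in infer_instance
  obtain ⟨f, hfA, φ, hφ, hconv⟩ := hFA.tendsto_subseq (fun n => subset_closure ⟨n, rfl⟩)
  refine ⟨φ, hφ, fun t => f (Set.projIcc 0 T hT.le t),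
    (f.continuous.comp continuous_projIcc).continuousOn, ?_⟩
  rw [tendstoUniformlyOn_iff_tendstoUniformly_comp_coe]
  have hconv' : TendstoUniformly (fun k => ⇑(F (φ k))) (⇑f) atTop :=
    BoundedContinuousFunction.tendsto_iff_tendstoUniformly.1 hconv
  have hlim : ((fun t => f (Set.projIcc 0 T hT.le t)) ∘ ((↑) : Set.Icc (0:ℝ) T → ℝ)) = ⇑f := by
    funext x
    simp [Function.comp, Set.projIcc_val]
  rw [hlim]
  exact hconv'
end

section
/- Let (S_β)_{β ∈ ℕ} satisfy Assumption A, let u_{β_k} : [0,T] → ℝ^N be continuous functions (indexed by a strictly increasing sequence β_1 < β_2 < …) converging uniformly on [0,T] to a function v that is threshold simple. Then for every t ∈ [0,T] and every i = 1,…,N, Σ_{j=1}^N ω_{ij} ∫_0^t S_{β_k}(u_{β_k,j}(s) - u_θ) ds converges, as k → ∞, to Σ_{j=1}^N ω_{ij} ∫_0^t H(v_j(s) - u_θ) ds, where H is the Heaviside function. -/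
/-!
Off the null set where some component of `v` touches the threshold, `v s j - uθ` is nonzero,
so uniform convergence and the sharpening of `S_β` into a step give
`S_{β_k}(u_{β_k,j}(s) - uθ) → H(v_j(s) - uθ)` for almost every `s`. The integrands are
continuous (the `S_β` are Lipschitz) and bounded by `1`, so dominated convergence passes the
limit under the integral.
-/

open Set Finset Filter MeasureTheory

/-- The Heaviside function with `H 0 = 1/2`. -/
noncomputable def Heaviside (x : ℝ) : ℝ :=
  if x < 0 then 0 else if x = 0 then 1/2 else 1

open Topology

lemma Heaviside_of_neg {x : ℝ} (hx : x < 0) : Heaviside x = 0 := by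
  simp [Heaviside, hx]

lemma Heaviside_of_pos {x : ℝ} (hx : 0 < x) : Heaviside x = 1 := by
  simp [Heaviside, hx.not_gt, hx.ne']

section SharpLimit

variable {S : ℕ → ℝ → ℝ}
  (hA : ∀ ε > (0:ℝ), ∀ δ > (0:ℝ), ∃ Q : ℕ, ∀ b > Q,
    (∀ x < -δ, |S b x| < ε) ∧ (∀ x > δ, |1 - S b x| < ε))
  {ι : Type*} {l : Filter ι} {β : ι → ℕ} (hβ : Tendsto β l atTop)
  {x : ι → ℝ} {L : ℝ}
include hA hβ

lemma tendsto_zero_of_tendsto_neg (hL : L < 0) (hx : Tendsto x l (𝓝 L)) :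
    Tendsto (fun k => S (β k) (x k)) l (𝓝 0) := by
  rw [Metric.tendsto_nhds]
  intro ε hε
  obtain ⟨Q, hQ⟩ := hA ε hε (-L / 2) (by linarith)
  filter_upwards [hx.eventually (eventually_lt_nhds (by linarith : L < L / 2)),
    hβ.eventually_gt_atTop Q] with k hxk hβk
  rw [Real.dist_eq, sub_zero]
  exact (hQ _ hβk).1 _ (by linarith)

lemma tendsto_one_of_tendsto_pos (hL : 0 < L) (hx : Tendsto x l (𝓝 L)) :
    Tendsto (fun k => S (β k) (x k)) l (𝓝 1) := by
  rw [Metric.tendsto_nhds]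
  intro ε hε
  obtain ⟨Q, hQ⟩ := hA ε hε (L / 2) (by linarith)
  filter_upwards [hx.eventually (eventually_gt_nhds (by linarith : L / 2 < L)),
    hβ.eventually_gt_atTop Q] with k hxk hβk
  rw [Real.dist_eq, abs_sub_comm]
  exact (hQ _ hβk).2 _ hxk

lemma tendsto_Heaviside_of_tendsto_ne_zero (hL : L ≠ 0) (hx : Tendsto x l (𝓝 L)) :
    Tendsto (fun k => S (β k) (x k)) l (𝓝 (Heaviside L)) := by
  rcases hL.lt_or_gt with hneg | hpos
  · rw [Heaviside_of_neg hneg]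
    exact tendsto_zero_of_tendsto_neg hA hβ hneg hx
  · rw [Heaviside_of_pos hpos]
    exact tendsto_one_of_tendsto_pos hA hβ hpos hx

lemma tendsto_intervalIntegral_Heaviside
    (hcont : ∀ b, Continuous (S b)) (hbd : ∀ b x, S b x ∈ Icc (0:ℝ) 1)
    {a c : ℝ} {f : ι → ℝ → ℝ} {g : ℝ → ℝ} [l.IsCountablyGenerated]
    (hf : ∀ k, ContinuousOn (f k) (uIcc a c))
    (hfg : ∀ s ∈ uIcc a c, Tendsto (f · s) l (𝓝 (g s)))
    (hg : ∀ᵐ s, s ∈ uIcc a c → g s ≠ 0) :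
    Tendsto (fun k => ∫ s in a..c, S (β k) (f k s)) l
      (𝓝 (∫ s in a..c, Heaviside (g s))) := by
  refine intervalIntegral.tendsto_integral_filter_of_dominated_convergence (fun _ => 1)
    (Eventually.of_forall fun k => ?_) (Eventually.of_forall fun k => ?_)
    intervalIntegrable_const ?_
  · exact (((hcont (β k)).comp_continuousOn (hf k)).aestronglyMeasurable
      measurableSet_uIcc).mono_measure (Measure.restrict_mono uIoc_subset_uIcc le_rfl)
  · refine Eventually.of_forall fun s _ => ?_
    rw [Real.norm_eq_abs, abs_le]
    exact ⟨by linarith [(hbd (β k) (f k s)).1], (hbd (β k) (f k s)).2⟩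
  · filter_upwards [hg] with s hgs hs
    have hs' := uIoc_subset_uIcc hs
    exact tendsto_Heaviside_of_tendsto_ne_zero hA hβ (hgs hs') (hfg s hs')

end SharpLimit

lemma ae_sub_ne_zero_of_volume_inf'_eq_zero {N : ℕ} [NeZero N] {T uθ : ℝ}
    {v : ℝ → Fin N → ℝ}
    (hts : volume {s : ℝ | s ∈ Icc 0 T ∧
      (Finset.univ.inf' Finset.univ_nonempty fun j => |v s j - uθ|) = 0} = 0) (j : Fin N) :
    ∀ᵐ s, s ∈ Icc 0 T → v s j - uθ ≠ 0 := by
  filter_upwards [measure_eq_zero_iff_ae_notMem.mp hts] with s hs hsT hzero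
  refine hs ⟨hsT, le_antisymm ?_ (Finset.le_inf' _ _ fun _ _ => abs_nonneg _)⟩
  exact (Finset.inf'_le (fun j => |v s j - uθ|) (Finset.mem_univ j)).trans_eq
    (by rw [hzero, abs_zero])

theorem stmt_5_general
    (N : ℕ) [NeZero N] (T : ℝ)
    (ω : Fin N → Fin N → ℝ) (uθ : ℝ)
    (S : ℕ → ℝ → ℝ)
    (hLip : ∀ β, ∃ K : NNReal, LipschitzWith K (S β))
    (hbd : ∀ β x, S β x ∈ Set.Icc (0:ℝ) 1)
    (hA : ∀ ε > (0:ℝ), ∀ δ > (0:ℝ), ∃ Q : ℕ, ∀ β > Q,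
      (∀ x < -δ, |S β x| < ε) ∧ (∀ x > δ, |1 - S β x| < ε))
    (β : ℕ → ℕ) (hβ : StrictMono β)
    (u : ℕ → ℝ → Fin N → ℝ) (hu : ∀ k, ContinuousOn (u k) (Set.Icc 0 T))
    (v : ℝ → Fin N → ℝ)
    (hconv : TendstoUniformlyOn u v Filter.atTop (Set.Icc 0 T))
    (hts : volume {s : ℝ | s ∈ Set.Icc 0 T ∧
      (Finset.univ.inf' Finset.univ_nonempty fun j => |v s j - uθ|) = 0} = 0) :
    ∀ t ∈ Set.Icc (0:ℝ) T, ∀ i,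
      Filter.Tendsto
        (fun k => ∑ j, ω i j * ∫ s in (0:ℝ)..t, S (β k) (u k s j - uθ))
        Filter.atTop
        (nhds (∑ j, ω i j * ∫ s in (0:ℝ)..t, Heaviside (v s j - uθ))) := by
  intro t ht i
  have hsub : uIcc 0 t ⊆ Icc 0 T := by
    rw [uIcc_of_le ht.1]
    exact Icc_subset_Icc_right ht.2
  refine tendsto_finsetSum _ fun j _ => (Tendsto.const_mul _ ?_)
  refine tendsto_intervalIntegral_Heaviside hA hβ.tendsto_atTop
    (fun b => (hLip b).choose_spec.continuous) hbd
    (fun k => ((continuous_apply j).comp_continuousOn ((hu k).mono hsub)).sub continuousOn_const)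
    (fun s hs => ?_) ?_
  · exact (tendsto_pi_nhds.mp (hconv.tendsto_at (hsub hs)) j).sub_const uθ
  · filter_upwards [ae_sub_ne_zero_of_volume_inf'_eq_zero hts j] with s hs hst
    exact hs (hsub hst)

theorem stmt_5
    (N : ℕ) [NeZero N] (T : ℝ) (hT : 0 < T)
    (ω : Fin N → Fin N → ℝ) (uθ : ℝ)
    (S : ℕ → ℝ → ℝ)
    (hLip : ∀ β, ∃ K : NNReal, LipschitzWith K (S β))
    (hbd : ∀ β x, S β x ∈ Set.Icc (0:ℝ) 1)
    (hA : ∀ ε > (0:ℝ), ∀ δ > (0:ℝ), ∃ Q : ℕ, ∀ β > Q,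
      (∀ x < -δ, |S β x| < ε) ∧ (∀ x > δ, |1 - S β x| < ε))
    (β : ℕ → ℕ) (hβ : StrictMono β)
    (u : ℕ → ℝ → Fin N → ℝ) (hu : ∀ k, ContinuousOn (u k) (Set.Icc 0 T))
    (v : ℝ → Fin N → ℝ)
    (hconv : TendstoUniformlyOn u v Filter.atTop (Set.Icc 0 T))
    (hts : volume {s : ℝ | s ∈ Set.Icc 0 T ∧
      (Finset.univ.inf' Finset.univ_nonempty fun j => |v s j - uθ|) = 0} = 0) :
    ∀ t ∈ Set.Icc (0:ℝ) T, ∀ i,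
      Filter.Tendsto
        (fun k => ∑ j, ω i j * ∫ s in (0:ℝ)..t, S (β k) (u k s j - uθ))
        Filter.atTop
        (nhds (∑ j, ω i j * ∫ s in (0:ℝ)..t, Heaviside (v s j - uθ))) :=
  stmt_5_general N T ω uθ S hLip hbd hA β hβ u hu v hconv hts
end

section
/- Let (S_β)_{β ∈ ℕ} satisfy Assumption A and (q_β)_{β ∈ ℕ}, q_∞ satisfy Assumption B. For a strictly increasing sequence of indices β_k, let u_{β_k} : [0,T] → ℝ^N be differentiable with u_{β_k}(0) = u_init and τ_i u_{β_k,i}'(t) = -u_{β_k,i}(t) + Σ_{j=1}^N ω_{ij} S_{β_k}(u_{β_k,j}(t) - u_θ) + q_{β_k,i}(t) for all t ∈ (0,T] and all i, where each τ_i > 0. Suppose u_{β_k} converges uniformly on [0,T] to a function v that is threshold simple. Then v satisfies, for every t ∈ [0,T] and every i, the Volterra equation τ_i v_i(t) - τ_i u_{init,i} = -∫_0^t v_i(s) ds + Σ_{j=1}^N ω_{ij} ∫_0^t H(v_j(s) - u_θ) ds + ∫_0^t q_{∞,i}(s) ds, where H is the Heaviside function. -/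
open Set Finset Filter MeasureTheory

set_option maxHeartbeats 1000000 in
theorem stmt_6
    (N : ℕ) [NeZero N] (T : ℝ) (hT : 0 < T)
    (τ : Fin N → ℝ) (hτ : ∀ i, 0 < τ i)
    (ω : Fin N → Fin N → ℝ) (uθ : ℝ) (uinit : Fin N → ℝ)
    -- Assumption A
    (S : ℕ → ℝ → ℝ)
    (hLip : ∀ β, ∃ K : NNReal, LipschitzWith K (S β))
    (hbd : ∀ β x, S β x ∈ Set.Icc (0:ℝ) 1)
    (hA : ∀ ε > (0:ℝ), ∀ δ > (0:ℝ), ∃ Q : ℕ, ∀ β > Q,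
      (∀ x < -δ, |S β x| < ε) ∧ (∀ x > δ, |1 - S β x| < ε))
    -- Assumption B
    (q : ℕ → ℝ → Fin N → ℝ) (qinf : ℝ → Fin N → ℝ)
    (hq_cont : ∀ β, ContinuousOn (q β) (Set.Icc 0 T))
    (hqinf_cont : ContinuousOn qinf (Set.Icc 0 T))
    (B : ℝ) (hqB : ∀ β, ∀ t ∈ Set.Icc (0:ℝ) T, ∀ i, |q β t i| ≤ B)
    (hq_ptw : ∀ t ∈ Set.Icc (0:ℝ) T,
      Filter.Tendsto (fun β => q β t) Filter.atTop (nhds (qinf t)))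
    (hq_int : ∀ t ∈ Set.Icc (0:ℝ) T, ∀ i,
      Filter.Tendsto (fun β => ∫ s in (0:ℝ)..t, q β s i) Filter.atTop
        (nhds (∫ s in (0:ℝ)..t, qinf s i)))
    -- the subsequence of solutions
    (β : ℕ → ℕ) (hβ : StrictMono β)
    (u u' : ℕ → ℝ → Fin N → ℝ)
    (hderiv : ∀ k, ∀ t ∈ Set.Icc (0:ℝ) T,
      HasDerivWithinAt (u k) (u' k t) (Set.Icc 0 T) t)
    (hinit : ∀ k, u k 0 = uinit)
    (hODE : ∀ k, ∀ t ∈ Set.Ioc (0:ℝ) T, ∀ i,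
      τ i * u' k t i = -u k t i + (∑ j, ω i j * S (β k) (u k t j - uθ)) + q (β k) t i)
    -- uniform convergence to a threshold simple limit
    (v : ℝ → Fin N → ℝ)
    (hconv : TendstoUniformlyOn u v Filter.atTop (Set.Icc 0 T))
    (hts : volume {s : ℝ | s ∈ Set.Icc 0 T ∧
      (Finset.univ.inf' Finset.univ_nonempty fun j => |v s j - uθ|) = 0} = 0) :
    ∀ t ∈ Set.Icc (0:ℝ) T, ∀ i,
      τ i * v t i - τ i * uinit i =
        -(∫ s in (0:ℝ)..t, v s i)
        + (∑ j, ω i j * ∫ s in (0:ℝ)..t, Heaviside (v s j - uθ))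
        + ∫ s in (0:ℝ)..t, qinf s i := by
  -- basic continuity facts
  have uc : ∀ k, ContinuousOn (u k) (Set.Icc 0 T) := fun k x hx =>
    (hderiv k x hx).continuousWithinAt
  have ucomp : ∀ k i, ContinuousOn (fun s => u k s i) (Set.Icc 0 T) := fun k i =>
    (continuous_apply i).comp_continuousOn (uc k)
  have Scont : ∀ b, Continuous (S b) := fun b => (hLip b).choose_spec.continuous
  have qcomp : ∀ b i, ContinuousOn (fun s => q b s i) (Set.Icc 0 T) := fun b i =>
    (continuous_apply i).comp_continuousOn (hq_cont b)
  have vcont : ContinuousOn v (Set.Icc 0 T) :=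
    hconv.continuousOn (Filter.Eventually.of_forall uc).frequently
  -- the key integral identity for each k
  have key : ∀ k, ∀ t ∈ Set.Icc (0:ℝ) T, ∀ i,
      τ i * u k t i - τ i * uinit i =
        -(∫ s in (0:ℝ)..t, u k s i)
        + (∑ j, ω i j * ∫ s in (0:ℝ)..t, S (β k) (u k s j - uθ))
        + ∫ s in (0:ℝ)..t, q (β k) s i := by
    intro k t ht i
    obtain ⟨ht0, htT⟩ := ht
    have hsub : Set.Icc (0:ℝ) t ⊆ Set.Icc 0 T := Set.Icc_subset_Icc le_rfl htT
    have hu : Set.uIcc (0:ℝ) t = Set.Icc 0 t := Set.uIcc_of_le ht0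
    set F : ℝ → ℝ := fun s =>
      -u k s i + (∑ j, ω i j * S (β k) (u k s j - uθ)) + q (β k) s i with hF
    have Fcont : ContinuousOn F (Set.Icc 0 T) := by
      apply ContinuousOn.add
      apply ContinuousOn.add
      · exact (ucomp k i).neg
      · apply continuousOn_finset_sum
        intro j _
        exact continuousOn_const.mul
          ((Scont (β k)).comp_continuousOn ((ucomp k j).sub continuousOn_const))
      · exact qcomp (β k) i
    have Iu : IntervalIntegrable (fun s => u k s i) volume 0 t :=
      ((ucomp k i).mono (hu ▸ hsub)).intervalIntegrable
    have ISj : ∀ j, IntervalIntegrable (fun s => ω i j * S (β k) (u k s j - uθ)) volume 0 t := by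
      intro j
      refine ContinuousOn.intervalIntegrable ?_
      rw [hu]
      exact (continuousOn_const.mul
        ((Scont (β k)).comp_continuousOn ((ucomp k j).sub continuousOn_const))).mono hsub
    have ISsum : IntervalIntegrable
        (fun s => ∑ j, ω i j * S (β k) (u k s j - uθ)) volume 0 t := by
      refine ContinuousOn.intervalIntegrable ?_
      rw [hu]
      refine (continuousOn_finset_sum _ fun j _ => ?_).mono hsub
      exact continuousOn_const.mul
        ((Scont (β k)).comp_continuousOn ((ucomp k j).sub continuousOn_const))
    have Iq : IntervalIntegrable (fun s => q (β k) s i) volume 0 t :=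
      ((qcomp (β k) i).mono (hu ▸ hsub)).intervalIntegrable
    have hFTC : (∫ s in (0:ℝ)..t, F s) = τ i * u k t i - τ i * u k 0 i := by
      apply intervalIntegral.integral_eq_sub_of_hasDeriv_right_of_le ht0
      · exact continuousOn_const.mul ((ucomp k i).mono hsub)
      · intro x hx
        have hxI : x ∈ Set.Icc (0:ℝ) T := ⟨hx.1.le, hx.2.le.trans htT⟩
        have hd : HasDerivWithinAt (fun s => u k s i) (u' k x i) (Set.Icc 0 T) x :=
          hasDerivWithinAt_pi.1 (hderiv k x hxI) i
        have hd2 : HasDerivWithinAt (fun s => τ i * u k s i) (τ i * u' k x i)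
            (Set.Icc 0 T) x := hd.const_mul (τ i)
        have hmem : Set.Icc (0:ℝ) T ∈ nhdsWithin x (Set.Ioi x) :=
          Icc_mem_nhdsGT_of_mem ⟨hx.1.le, hx.2.trans_le htT⟩
        have hd3 := hd2.mono_of_mem_nhdsWithin hmem
        rwa [hODE k x ⟨hx.1, hx.2.le.trans htT⟩ i] at hd3
      · exact ContinuousOn.intervalIntegrable (by rw [hu]; exact Fcont.mono hsub)
    have hsplit : (∫ s in (0:ℝ)..t, F s) =
        -(∫ s in (0:ℝ)..t, u k s i)
        + (∑ j, ω i j * ∫ s in (0:ℝ)..t, S (β k) (u k s j - uθ))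
        + ∫ s in (0:ℝ)..t, q (β k) s i := by
      have Iun : IntervalIntegrable (fun s => -u k s i) volume 0 t := Iu.neg
      have e1 : (∫ s in (0:ℝ)..t, F s)
          = (∫ s in (0:ℝ)..t, (-u k s i + ∑ j, ω i j * S (β k) (u k s j - uθ)))
            + ∫ s in (0:ℝ)..t, q (β k) s i :=
        intervalIntegral.integral_add (Iun.add ISsum) Iq
      have e2 : (∫ s in (0:ℝ)..t, (-u k s i + ∑ j, ω i j * S (β k) (u k s j - uθ)))
          = (∫ s in (0:ℝ)..t, -u k s i)
            + ∫ s in (0:ℝ)..t, ∑ j, ω i j * S (β k) (u k s j - uθ) :=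
        intervalIntegral.integral_add Iun ISsum
      have e3 : (∫ s in (0:ℝ)..t, -u k s i) = -(∫ s in (0:ℝ)..t, u k s i) :=
        intervalIntegral.integral_neg
      have e4 : (∫ s in (0:ℝ)..t, ∑ j, ω i j * S (β k) (u k s j - uθ))
          = ∑ j, ∫ s in (0:ℝ)..t, ω i j * S (β k) (u k s j - uθ) :=
        intervalIntegral.integral_finset_sum (fun j _ => ISj j)
      rw [e1, e2, e3, e4]
      simp_rw [intervalIntegral.integral_const_mul]
    rw [← hsplit, hFTC, hinit k]
  -- now the limit passage
  intro t ht i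
  obtain ⟨ht0, htT⟩ := ht
  have hIsub : Set.Ioc (0:ℝ) t ⊆ Set.Icc 0 T := fun x hx => ⟨hx.1.le, hx.2.trans htT⟩
  have hIoc : Set.uIoc (0:ℝ) t = Set.Ioc 0 t := Set.uIoc_of_le ht0
  -- bound for v
  obtain ⟨C, hC⟩ := isCompact_Icc.exists_bound_of_continuousOn vcont
  -- D1 : convergence of the left-hand sides
  have hpt : ∀ s ∈ Set.Icc (0:ℝ) T, Filter.Tendsto (fun k => u k s) Filter.atTop (nhds (v s)) :=
    fun s hs => hconv.tendsto_at hs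
  have hpti : ∀ s ∈ Set.Icc (0:ℝ) T, ∀ j,
      Filter.Tendsto (fun k => u k s j) Filter.atTop (nhds (v s j)) := fun s hs j =>
    ((continuous_apply j).tendsto (v s)).comp (hpt s hs)
  have D1 : Filter.Tendsto (fun k => τ i * u k t i - τ i * uinit i) Filter.atTop
      (nhds (τ i * v t i - τ i * uinit i)) :=
    ((hpti t ⟨ht0, htT⟩ i).const_mul (τ i)).sub tendsto_const_nhds
  -- measurability helpers
  have meas_u : ∀ k, AEStronglyMeasurable (fun s => u k s i)
      (volume.restrict (Set.uIoc 0 t)) := by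
    intro k
    rw [hIoc]
    exact ((ucomp k i).mono hIsub).aestronglyMeasurable measurableSet_Ioc
  -- D2 : convergence of ∫ u
  have D2 : Filter.Tendsto (fun k => ∫ s in (0:ℝ)..t, u k s i) Filter.atTop
      (nhds (∫ s in (0:ℝ)..t, v s i)) := by
    apply intervalIntegral.tendsto_integral_filter_of_dominated_convergence (fun _ => C + 1)
    · exact Filter.Eventually.of_forall meas_u
    · have h1 : ∀ᶠ k in Filter.atTop, ∀ x ∈ Set.Icc (0:ℝ) T, dist (v x) (u k x) < 1 := by
        have := (Metric.tendstoUniformlyOn_iff.1 hconv) 1 one_pos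
        exact this
      filter_upwards [h1] with k hk
      apply Filter.Eventually.of_forall
      intro s hs
      rw [hIoc] at hs
      have hsT : s ∈ Set.Icc (0:ℝ) T := hIsub hs
      have h2 : dist (v s i) (u k s i) ≤ dist (v s) (u k s) := dist_le_pi_dist _ _ i
      have h3 : |v s i| ≤ C := (norm_le_pi_norm (v s) i).trans (hC s hsT)
      have h4 := (hk s hsT)
      have : |u k s i| ≤ |v s i| + dist (v s i) (u k s i) := by
        rw [Real.dist_eq]
        have := abs_sub_abs_le_abs_sub (u k s i) (v s i)
        have h5 : |v s i - u k s i| = |u k s i - v s i| := abs_sub_comm _ _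
        rw [h5]; linarith [abs_sub_abs_le_abs_sub (u k s i) (v s i)]
      simp only [Real.norm_eq_abs]
      linarith
    · exact intervalIntegrable_const
    · apply Filter.Eventually.of_forall
      intro s hs
      rw [hIoc] at hs
      exact hpti s (hIsub hs) i
  -- the a.e. statement : away from the threshold set
  have hbad : ∀ᵐ s ∂(volume : Measure ℝ), ¬(s ∈ Set.Icc 0 T ∧
      (Finset.univ.inf' Finset.univ_nonempty fun j => |v s j - uθ|) = 0) := by
    rw [ae_iff]
    simpa [not_not, Set.mem_Icc, and_assoc] using hts
  -- D3 : convergence of ∫ S towards ∫ Heaviside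
  have D3 : ∀ j, Filter.Tendsto (fun k => ∫ s in (0:ℝ)..t, S (β k) (u k s j - uθ))
      Filter.atTop (nhds (∫ s in (0:ℝ)..t, Heaviside (v s j - uθ))) := by
    intro j
    apply intervalIntegral.tendsto_integral_filter_of_dominated_convergence (fun _ => 1)
    · apply Filter.Eventually.of_forall
      intro k
      rw [hIoc]
      exact ((Scont (β k)).comp_continuousOn
        (((ucomp k j).mono hIsub).sub continuousOn_const)).aestronglyMeasurable
        measurableSet_Ioc
    · apply Filter.Eventually.of_forall
      intro k
      apply Filter.Eventually.of_forall
      intro s _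
      have := hbd (β k) (u k s j - uθ)
      rw [Real.norm_eq_abs, abs_le]
      constructor <;> linarith [this.1, this.2]
    · exact intervalIntegrable_const
    · filter_upwards [hbad] with s hs hsI
      rw [hIoc] at hsI
      have hsT : s ∈ Set.Icc (0:ℝ) T := hIsub hsI
      have hinf : (Finset.univ.inf' Finset.univ_nonempty fun j => |v s j - uθ|) ≠ 0 := by
        intro h0
        exact hs ⟨hsT, h0⟩
      have hvj : v s j ≠ uθ := by
        intro h
        apply hinf
        apply le_antisymm
        · have : (Finset.univ.inf' Finset.univ_nonempty fun j => |v s j - uθ|)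
              ≤ |v s j - uθ| := Finset.inf'_le _ (Finset.mem_univ j)
          simpa [h] using this
        · exact Finset.le_inf' _ _ fun b _ => abs_nonneg _
      have hup : Filter.Tendsto (fun k => u k s j) Filter.atTop (nhds (v s j)) :=
        hpti s hsT j
      rcases lt_or_gt_of_ne hvj with hlt | hgt
      · -- v s j < uθ : Heaviside value 0
        have hH : Heaviside (v s j - uθ) = 0 := by
          simp [Heaviside, sub_neg.2 hlt]
        rw [hH, Metric.tendsto_atTop]
        intro ε hε
        set δ := (uθ - v s j) / 2 with hδdef
        have hδ : 0 < δ := by simp only [hδdef]; linarith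
        obtain ⟨Q, hQ⟩ := hA ε hε δ hδ
        have h1 : ∀ᶠ k in Filter.atTop, Q < β k := hβ.tendsto_atTop.eventually_gt_atTop Q
        have h2 : ∀ᶠ k in Filter.atTop, u k s j < uθ - δ :=
          hup.eventually (gt_mem_nhds (by simp only [hδdef]; linarith))
        rcases Filter.eventually_atTop.1 (h1.and h2) with ⟨K, hK⟩
        refine ⟨K, fun k hk => ?_⟩
        have hx : u k s j - uθ < -δ := by linarith [(hK k hk).2]
        have := (hQ (β k) (hK k hk).1).1 _ hx
        rwa [Real.dist_eq, sub_zero]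
      · -- v s j > uθ : Heaviside value 1
        have hH : Heaviside (v s j - uθ) = 1 := by
          have h1 : ¬(v s j - uθ < 0) := by linarith
          have h2 : v s j - uθ ≠ 0 := by intro h; apply hvj; linarith [sub_eq_zero.1 h]
          simp [Heaviside, h1, h2]
        rw [hH, Metric.tendsto_atTop]
        intro ε hε
        set δ := (v s j - uθ) / 2 with hδdef
        have hδ : 0 < δ := by simp only [hδdef]; linarith
        obtain ⟨Q, hQ⟩ := hA ε hε δ hδ
        have h1 : ∀ᶠ k in Filter.atTop, Q < β k := hβ.tendsto_atTop.eventually_gt_atTop Q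
        have h2 : ∀ᶠ k in Filter.atTop, uθ + δ < u k s j :=
          hup.eventually (lt_mem_nhds (by simp only [hδdef]; linarith))
        rcases Filter.eventually_atTop.1 (h1.and h2) with ⟨K, hK⟩
        refine ⟨K, fun k hk => ?_⟩
        have hx : δ < u k s j - uθ := by linarith [(hK k hk).2]
        have := (hQ (β k) (hK k hk).1).2 _ hx
        rw [Real.dist_eq, abs_sub_comm]
        exact this
  -- D4 : convergence of ∫ q
  have D4 : Filter.Tendsto (fun k => ∫ s in (0:ℝ)..t, q (β k) s i) Filter.atTop
      (nhds (∫ s in (0:ℝ)..t, qinf s i)) :=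
    (hq_int t ⟨ht0, htT⟩ i).comp hβ.tendsto_atTop
  -- combine
  have hRHS : Filter.Tendsto (fun k =>
      -(∫ s in (0:ℝ)..t, u k s i)
      + (∑ j, ω i j * ∫ s in (0:ℝ)..t, S (β k) (u k s j - uθ))
      + ∫ s in (0:ℝ)..t, q (β k) s i) Filter.atTop
      (nhds (-(∫ s in (0:ℝ)..t, v s i)
      + (∑ j, ω i j * ∫ s in (0:ℝ)..t, Heaviside (v s j - uθ))
      + ∫ s in (0:ℝ)..t, qinf s i)) :=
    ((D2.neg.add (tendsto_finset_sum _ fun j _ => (D3 j).const_mul (ω i j))).add D4)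
  have hLHS : Filter.Tendsto (fun k => τ i * u k t i - τ i * uinit i) Filter.atTop
      (nhds (-(∫ s in (0:ℝ)..t, v s i)
      + (∑ j, ω i j * ∫ s in (0:ℝ)..t, Heaviside (v s j - uθ))
      + ∫ s in (0:ℝ)..t, qinf s i)) := by
    apply hRHS.congr
    intro k
    exact (key k t ⟨ht0, htT⟩ i).symm
  exact tendsto_nhds_unique D1 hLHS
end

section
/- Let v : [0,T] → ℝ^N be continuous, let q_∞ : [0,T] → ℝ^N be continuous, and suppose v satisfies the Volterra equation τ_i v_i(t) - τ_i v_i(0) = -∫_0^t v_i(s) ds + Σ_{j=1}^N ω_{ij} ∫_0^t H(v_j(s) - u_θ) ds + ∫_0^t q_{∞,i}(s) ds for every t ∈ [0,T] and every i, where each τ_i > 0. If v is extra threshold simple, then v is differentiable at every t ∈ (0,T] \ Z(v) and satisfies τ_i v_i'(t) = -v_i(t) + Σ_{j=1}^N ω_{ij} H(v_j(t) - u_θ) + q_{∞,i}(t) for every such t and every i, where Z(v) = { s ∈ [0,T] : min_j |v_j(s) - u_θ| = 0 }. -/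
open Set Finset Filter MeasureTheory Topology

lemma measurable_Heaviside : Measurable Heaviside := by
  have h1 : MeasurableSet {x : ℝ | x < 0} := measurableSet_lt measurable_id measurable_const
  have h2 : MeasurableSet {x : ℝ | x = 0} := measurableSet_eq
  exact Measurable.ite h1 measurable_const
    (Measurable.ite h2 measurable_const measurable_const)

lemma Heaviside_norm_le (x : ℝ) : ‖Heaviside x‖ ≤ 1 := by
  unfold Heaviside
  split_ifs <;> simp [Real.norm_eq_abs, abs_le] <;> norm_num

lemma continuousAt_Heaviside {x : ℝ} (hx : x ≠ 0) : ContinuousAt Heaviside x := by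
  rcases hx.lt_or_gt with h | h
  · have he : Heaviside =ᶠ[𝓝 x] fun _ => (0:ℝ) := by
      filter_upwards [eventually_lt_nhds h] with y hy
      simp [Heaviside, hy]
    exact (continuousAt_congr he).mpr continuousAt_const
  · have he : Heaviside =ᶠ[𝓝 x] fun _ => (1:ℝ) := by
      filter_upwards [eventually_gt_nhds h] with y hy
      simp [Heaviside, not_lt.mpr hy.le, hy.ne']
    exact (continuousAt_congr he).mpr continuousAt_const

theorem stmt_7
    (N : ℕ) [NeZero N] (T : ℝ) (hT : 0 < T)
    (τ : Fin N → ℝ) (hτ : ∀ i, 0 < τ i)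
    (ω : Fin N → Fin N → ℝ) (uθ : ℝ)
    (v : ℝ → Fin N → ℝ) (hv_cont : ContinuousOn v (Set.Icc 0 T))
    (qinf : ℝ → Fin N → ℝ) (hq_cont : ContinuousOn qinf (Set.Icc 0 T))
    -- Volterra equation
    (hVolterra : ∀ t ∈ Set.Icc (0:ℝ) T, ∀ i,
      τ i * v t i - τ i * v 0 i =
        -(∫ s in (0:ℝ)..t, v s i)
        + (∑ j, ω i j * ∫ s in (0:ℝ)..t, Heaviside (v s j - uθ))
        + ∫ s in (0:ℝ)..t, qinf s i)
    -- v is extra threshold simple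
    (hets : ∃ L : ℕ, 0 < L ∧ ∃ a : ℕ → ℝ, a 0 = 0 ∧ a L = T ∧
      (∀ l < L, a l < a (l + 1)) ∧
      (∀ l < L, ∀ s ∈ Set.Ioo (a l) (a (l + 1)),
        (Finset.univ.inf' Finset.univ_nonempty fun j => |v s j - uθ|) ≠ 0)) :
    ∀ t ∈ Set.Ioc (0:ℝ) T,
      (Finset.univ.inf' Finset.univ_nonempty fun j => |v t j - uθ|) ≠ 0 →
      ∀ i, HasDerivWithinAt (fun s => v s i)
        ((τ i)⁻¹ * (-v t i + (∑ j, ω i j * Heaviside (v t j - uθ)) + qinf t i))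
        (Set.Icc 0 T) t := by
  intro t ht hmin i
  have htI : t ∈ Icc (0:ℝ) T := ⟨ht.1.le, ht.2⟩
  haveI : Fact (t ∈ Icc (0:ℝ) T) := ⟨htI⟩
  have h0t : Icc (0:ℝ) t ⊆ Icc 0 T := Icc_subset_Icc le_rfl ht.2
  have hvj : ∀ j, ContinuousOn (fun s => v s j) (Icc 0 T) := fun j =>
    (continuous_apply j).comp_continuousOn hv_cont
  have hqi : ContinuousOn (fun s => qinf s i) (Icc 0 T) :=
    (continuous_apply i).comp_continuousOn hq_cont
  -- each component is away from threshold at t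
  have hne : ∀ j, v t j - uθ ≠ 0 := by
    intro j
    have h1 : (0:ℝ) ≤ Finset.univ.inf' Finset.univ_nonempty fun j => |v t j - uθ| :=
      Finset.le_inf' _ _ fun b _ => abs_nonneg _
    have h2 : (Finset.univ.inf' Finset.univ_nonempty fun j => |v t j - uθ|) ≤ |v t j - uθ| :=
      Finset.inf'_le _ (Finset.mem_univ j)
    have h0 : (0:ℝ) < Finset.univ.inf' Finset.univ_nonempty fun j => |v t j - uθ| :=
      h1.lt_of_ne (Ne.symm hmin)
    exact abs_pos.mp (h0.trans_le h2)
  -- measurability of Heaviside composition on measurable subsets of Icc 0 T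
  have hmeasOn : ∀ (s : Set ℝ), s ⊆ Icc 0 T → MeasurableSet s → ∀ j,
      AEStronglyMeasurable (fun u => Heaviside (v u j - uθ)) (volume.restrict s) := by
    intro s hs hms j
    have : AEMeasurable (fun u => v u j - uθ) (volume.restrict s) :=
      (((hvj j).mono hs).sub continuousOn_const).aemeasurable hms
    exact (measurable_Heaviside.comp_aemeasurable this).aestronglyMeasurable
  -- interval integrability
  have hint_H : ∀ j, IntervalIntegrable (fun s => Heaviside (v s j - uθ)) volume 0 t := by
    intro j
    rw [intervalIntegrable_iff_integrableOn_Icc_of_le ht.1.le]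
    apply Integrable.mono' (g := fun _ => (1:ℝ)) (integrable_const 1)
      (hmeasOn _ h0t measurableSet_Icc j)
    exact ae_of_all _ fun s => Heaviside_norm_le _
  have hint_v : IntervalIntegrable (fun s => v s i) volume 0 t := by
    apply ContinuousOn.intervalIntegrable
    rw [uIcc_of_le ht.1.le]; exact (hvj i).mono h0t
  have hint_q : IntervalIntegrable (fun s => qinf s i) volume 0 t := by
    apply ContinuousOn.intervalIntegrable
    rw [uIcc_of_le ht.1.le]; exact hqi.mono h0t
  -- derivatives of the integral terms
  have hderH : ∀ j, HasDerivWithinAt (fun u => ∫ s in (0:ℝ)..u, Heaviside (v s j - uθ))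
      (Heaviside (v t j - uθ)) (Icc 0 T) t := by
    intro j
    apply intervalIntegral.integral_hasDerivWithinAt_right (hint_H j)
      ⟨Icc 0 T, self_mem_nhdsWithin, hmeasOn _ (subset_refl _) measurableSet_Icc j⟩
    have hc : ContinuousWithinAt (fun s => v s j - uθ) (Icc 0 T) t :=
      ((hvj j).sub continuousOn_const) t htI
    exact Filter.Tendsto.comp (continuousAt_Heaviside (hne j)) hc
  have hderv : HasDerivWithinAt (fun u => ∫ s in (0:ℝ)..u, v s i) (v t i) (Icc 0 T) t := by
    apply intervalIntegral.integral_hasDerivWithinAt_right hint_v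
      ⟨Icc 0 T, self_mem_nhdsWithin, ((hvj i).aestronglyMeasurable measurableSet_Icc)⟩
    exact (hvj i) t htI
  have hderq : HasDerivWithinAt (fun u => ∫ s in (0:ℝ)..u, qinf s i) (qinf t i) (Icc 0 T) t := by
    apply intervalIntegral.integral_hasDerivWithinAt_right hint_q
      ⟨Icc 0 T, self_mem_nhdsWithin, (hqi.aestronglyMeasurable measurableSet_Icc)⟩
    exact hqi t htI
  -- the auxiliary function
  have hF : HasDerivWithinAt (fun u => v 0 i + (τ i)⁻¹ *
      (-(∫ s in (0:ℝ)..u, v s i)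
        + (∑ j, ω i j * ∫ s in (0:ℝ)..u, Heaviside (v s j - uθ))
        + ∫ s in (0:ℝ)..u, qinf s i))
      ((τ i)⁻¹ * (-v t i + (∑ j, ω i j * Heaviside (v t j - uθ)) + qinf t i))
      (Icc 0 T) t := by
    apply HasDerivWithinAt.const_add
    apply HasDerivWithinAt.const_mul
    exact (hderv.neg.add (HasDerivWithinAt.fun_sum fun j _ => (hderH j).const_mul (ω i j))).add hderq
  have hτi : (τ i) ≠ 0 := (hτ i).ne'
  refine hF.congr (fun u hu => ?_) ?_
  · have h := hVolterra u hu i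
    field_simp
    linarith [h]
  · have h := hVolterra t htI i
    field_simp
    linarith [h]
end

section
/- Let u_θ > 0, ω = 2 u_θ, and T > 0. Then the constant function v_3(t) = u_θ satisfies v_3'(t) = -v_3(t) + ω H(v_3(t) - u_θ) for all t ∈ [0,T], where H is the Heaviside function with H(0) = 1/2. Consequently, together with v_1(t) = ω + (u_θ - ω)e^{-t} and v_2(t) = u_θ e^{-t}, the initial value problem v'(t) = -v(t) + ω H(v(t) - u_θ) for t ∈ (0,T], v(0) = u_θ, has at least three pairwise distinct solutions on [0,T]. -/
open Set Finset Filter MeasureTheory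

theorem stmt_9
    (uθ ω T : ℝ) (huθ : 0 < uθ) (hω : ω = 2 * uθ) (hT : 0 < T)
    (v₁ v₂ v₃ : ℝ → ℝ)
    (hv₁ : v₁ = fun t => ω + (uθ - ω) * Real.exp (-t))
    (hv₂ : v₂ = fun t => uθ * Real.exp (-t))
    (hv₃ : v₃ = fun _ => uθ) :
    (∀ t ∈ Set.Icc (0:ℝ) T,
      HasDerivAt v₃ (-v₃ t + ω * Heaviside (v₃ t - uθ)) t) ∧
    v₁ 0 = uθ ∧ v₂ 0 = uθ ∧ v₃ 0 = uθ ∧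
    (∀ t ∈ Set.Ioc (0:ℝ) T,
      HasDerivAt v₁ (-v₁ t + ω * Heaviside (v₁ t - uθ)) t) ∧
    (∀ t ∈ Set.Ioc (0:ℝ) T,
      HasDerivAt v₂ (-v₂ t + ω * Heaviside (v₂ t - uθ)) t) ∧
    (∀ t ∈ Set.Ioc (0:ℝ) T, v₁ t ≠ v₂ t ∧ v₁ t ≠ v₃ t ∧ v₂ t ≠ v₃ t) := by
  subst hv₁ hv₂ hv₃ hω
  refine ⟨?_, by simp, by simp, rfl, ?_, ?_, ?_⟩
  · intro t _
    refine (hasDerivAt_const t uθ).congr_deriv ?_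
    symm
    simp [Heaviside]; ring
  · intro t ht
    have he : Real.exp (-t) < 1 := by
      rw [Real.exp_lt_one_iff]; linarith [ht.1]
    have hpos : 0 < 2 * uθ + (uθ - 2 * uθ) * Real.exp (-t) - uθ := by
      have := mul_lt_mul_of_pos_left he huθ
      nlinarith
    have hH : Heaviside (2 * uθ + (uθ - 2 * uθ) * Real.exp (-t) - uθ) = 1 := by
      simp [Heaviside, not_lt.mpr hpos.le, hpos.ne']
    have hd : HasDerivAt (fun t => 2 * uθ + (uθ - 2 * uθ) * Real.exp (-t))
        ((uθ - 2 * uθ) * (Real.exp (-t) * (-1))) t := by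
      have := ((Real.hasDerivAt_exp (-t)).comp t ((hasDerivAt_id t).neg)).const_mul
        (uθ - 2 * uθ)
      simpa using this.const_add (2 * uθ)
    convert hd using 1
    rw [hH]; ring
  · intro t ht
    have he : Real.exp (-t) < 1 := by
      rw [Real.exp_lt_one_iff]; linarith [ht.1]
    have hneg : uθ * Real.exp (-t) - uθ < 0 := by nlinarith
    have hH : Heaviside (uθ * Real.exp (-t) - uθ) = 0 := by
      simp [Heaviside, hneg]
    have hd : HasDerivAt (fun t => uθ * Real.exp (-t))
        (uθ * (Real.exp (-t) * (-1))) t := by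
      exact ((Real.hasDerivAt_exp (-t)).comp t ((hasDerivAt_id t).neg)).const_mul uθ
    convert hd using 1
    rw [hH]; ring
  · intro t ht
    have he : Real.exp (-t) < 1 := by
      rw [Real.exp_lt_one_iff]; linarith [ht.1]
    have hep : 0 < Real.exp (-t) := Real.exp_pos _
    refine ⟨?_, ?_, ?_⟩ <;> simp only [] <;> nlinarith
end

section
/- Let v, ṽ : [0,T] → ℝ^N both be differentiable with v(0) = ṽ(0) = u_init and satisfy τ_i v_i'(t) = -v_i(t) + Σ_{j=1}^N ω_{ij} H(v_j(t) - u_θ) + q_{∞,i}(t) for ALL t ∈ [0,T] (including t = 0 and every threshold time) and all i, where each τ_i > 0, q_∞ : [0,T] → ℝ^N is continuous, and H is the Heaviside function. If both v and ṽ are extra threshold simple and right smooth, then v(t) = ṽ(t) for all t ∈ [0,T]. That is, this problem has at most one solution that is both extra threshold simple and right smooth. -/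
/-!
Between consecutive threshold times no component of a solution crosses `uθ`, so its Heaviside
terms are constant there. Right smoothness lets the ODE pass to the limit from the right at the
left endpoint `t₀`: the synaptic input at `t₀` equals `τ u' + u - q` there, hence already has the
constant value it takes just after `t₀`. So if `v t₀ = w t₀`, the inputs of `v` and `w` agree on
some `[t₀, β)`, the difference `v - w` solves `τ d' = -d` with `d t₀ = 0` there, and it vanishes by
Grönwall. A continuous induction on `[0, T]` concludes.
-/

open Set Finset Filter MeasureTheory

theorem exists_mem_Ico_of_le_of_lt {α : Type*} [LinearOrder α] (a : ℕ → α) {t : α} {L : ℕ}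
    (h0 : a 0 ≤ t) (hL : t < a L) : ∃ l < L, t ∈ Ico (a l) (a (l + 1)) := by
  induction L with
  | zero => exact absurd (h0.trans_lt hL) (lt_irrefl _)
  | succ L ih =>
    by_cases h : a L ≤ t
    · exact ⟨L, L.lt_succ_self, h, hL⟩
    · obtain ⟨l, hl, hmem⟩ := ih (not_le.1 h)
      exact ⟨l, hl.trans L.lt_succ_self, hmem⟩

theorem ContinuousWithinAt.eq_of_forall_Ioo_eq {X : Type*} [TopologicalSpace X] [T2Space X]
    {f : ℝ → X} {a b : ℝ} {c : X} (hab : a < b) (hf : ContinuousWithinAt f (Ico a b) a)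
    (h : ∀ x ∈ Ioo a b, f x = c) : f a = c :=
  haveI := left_nhdsWithin_Ioo_neBot hab
  tendsto_nhds_unique (hf.mono Ioo_subset_Ico_self)
    (tendsto_const_nhds.congr' (eventually_nhdsWithin_of_forall fun x hx => (h x hx).symm))

theorem IsPreconnected.heaviside_comp_eq {f : ℝ → ℝ} {s : Set ℝ} (hs : IsPreconnected s)
    (hf : ContinuousOn f s) (hne : ∀ x ∈ s, f x ≠ 0) {x y : ℝ} (hx : x ∈ s) (hy : y ∈ s) :
    Heaviside (f x) = Heaviside (f y) := by
  have neg_of_neg : ∀ a ∈ s, ∀ b ∈ s, f a < 0 → f b < 0 := fun a ha b hb hfa => by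
    by_contra! hfb
    obtain ⟨z, hz, hz0⟩ := hs.intermediate_value ha hb hf ⟨hfa.le, hfb⟩
    exact hne z hz hz0
  rcases (hne x hx).lt_or_gt with h | h
  · simp [Heaviside, h, neg_of_neg x hx y hy h]
  · have hy' : 0 < f y := ((hne y hy).lt_or_gt.resolve_left
      fun hfy => (neg_of_neg y hy x hx hfy).not_gt h)
    simp [Heaviside, h.not_gt, hy'.not_gt, h.ne', hy'.ne']

def ExtraThresholdSimple {N : ℕ} [NeZero N] (T uθ : ℝ) (z : ℝ → Fin N → ℝ) : Prop :=
  ∃ L : ℕ, 0 < L ∧ ∃ a : ℕ → ℝ, a 0 = 0 ∧ a L = T ∧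
    (∀ l < L, a l < a (l + 1)) ∧
    (∀ l < L, ∀ s ∈ Ioo (a l) (a (l + 1)),
      (Finset.univ.inf' Finset.univ_nonempty fun j => |z s j - uθ|) ≠ 0)

theorem ExtraThresholdSimple.exists_Ioo_forall_ne {N : ℕ} [NeZero N] {T uθ : ℝ}
    {z : ℝ → Fin N → ℝ} (hz : ExtraThresholdSimple T uθ z) {t : ℝ} (ht : t ∈ Ico 0 T) :
    ∃ β, t < β ∧ β ≤ T ∧ ∀ s ∈ Ioo t β, ∀ j, z s j ≠ uθ := by
  obtain ⟨L, -, a, ha₀, haL, -, hz⟩ := hz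
  obtain ⟨l, hl, hal, hal'⟩ := exists_mem_Ico_of_le_of_lt a (ha₀ ▸ ht.1) (haL ▸ ht.2)
  refine ⟨min (a (l + 1)) T, lt_min hal' ht.2, min_le_right _ _, fun s hs j hj => ?_⟩
  refine hz l hl s ⟨hal.trans_lt hs.1, hs.2.trans_le (min_le_left _ _)⟩ (le_antisymm ?_ ?_)
  · exact Finset.inf'_le_of_le _ (Finset.mem_univ j) (by simp [hj])
  · exact Finset.le_inf' _ _ fun _ _ => abs_nonneg _

section Network

variable {N : ℕ}

noncomputable def synapticInput (ω : Fin N → Fin N → ℝ) (uθ : ℝ) (u : Fin N → ℝ) (i : Fin N) : ℝ :=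
  ∑ j, ω i j * Heaviside (u j - uθ)

variable {τ : Fin N → ℝ} {ω : Fin N → Fin N → ℝ} {uθ : ℝ}

theorem synapticInput_eq_of_isPreconnected {u : ℝ → Fin N → ℝ} {s : Set ℝ}
    (hs : IsPreconnected s) (hu : ContinuousOn u s) (hne : ∀ x ∈ s, ∀ j, u x j ≠ uθ)
    {x y : ℝ} (hx : x ∈ s) (hy : y ∈ s) :
    synapticInput ω uθ (u x) = synapticInput ω uθ (u y) := by
  funext i
  refine Finset.sum_congr rfl fun j _ => congrArg (ω i j * ·) ?_
  exact hs.heaviside_comp_eq (f := fun t => u t j - uθ)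
    (((continuous_apply j).comp_continuousOn hu).sub continuousOn_const)
    (fun t ht => sub_ne_zero.2 (hne t ht j)) hx hy

theorem synapticInput_eq_of_rightSmooth {q u u' : ℝ → Fin N → ℝ} {t₀ β : ℝ} (hβ : t₀ < β)
    (hode : ∀ t ∈ Ico t₀ β, ∀ i, τ i * u' t i = -u t i + synapticInput ω uθ (u t) i + q t i)
    (hu : ContinuousOn u (Ico t₀ β)) (hu' : ContinuousWithinAt u' (Ico t₀ β) t₀)
    (hq : ContinuousWithinAt q (Ico t₀ β) t₀) (hne : ∀ t ∈ Ioo t₀ β, ∀ j, u t j ≠ uθ) :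
    ∀ t ∈ Ico t₀ β, synapticInput ω uθ (u t) = synapticInput ω uθ (u t₀) := by
  have hmid : (t₀ + β) / 2 ∈ Ioo t₀ β := ⟨by linarith, by linarith⟩
  have hconst : ∀ t ∈ Ioo t₀ β,
      synapticInput ω uθ (u t) = synapticInput ω uθ (u ((t₀ + β) / 2)) := fun t ht =>
    synapticInput_eq_of_isPreconnected isPreconnected_Ioo (hu.mono Ioo_subset_Ico_self) hne ht hmid
  have hcont : ContinuousWithinAt (fun t => synapticInput ω uθ (u t)) (Ico t₀ β) t₀ := by
    refine ContinuousWithinAt.congr (f := fun t => τ * u' t + u t - q t) ?_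
      (fun t ht => funext fun i => ?_) (funext fun i => ?_)
    · exact ((continuousWithinAt_const.mul hu').add (hu t₀ ⟨le_rfl, hβ⟩)).sub hq
    all_goals simp only [Pi.add_apply, Pi.sub_apply, Pi.mul_apply]
    · rw [hode t ht i]; ring
    · rw [hode t₀ ⟨le_rfl, hβ⟩ i]; ring
  intro t ht
  rcases ht.1.eq_or_lt with rfl | ht₀
  · rfl
  · rw [hconst t ⟨ht₀, ht.2⟩, ← hcont.eq_of_forall_Ioo_eq hβ hconst]

theorem eqOn_Icc_of_rightSmooth {q v w v' w' : ℝ → Fin N → ℝ} {t₀ β : ℝ} (hτ : ∀ i, 0 < τ i)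
    (hβ : t₀ < β)
    (hvode : ∀ t ∈ Ico t₀ β, ∀ i, τ i * v' t i = -v t i + synapticInput ω uθ (v t) i + q t i)
    (hwode : ∀ t ∈ Ico t₀ β, ∀ i, τ i * w' t i = -w t i + synapticInput ω uθ (w t) i + q t i)
    (hv : ContinuousOn v (Icc t₀ β)) (hw : ContinuousOn w (Icc t₀ β))
    (hvderiv : ∀ t ∈ Ico t₀ β, HasDerivWithinAt v (v' t) (Ici t) t)
    (hwderiv : ∀ t ∈ Ico t₀ β, HasDerivWithinAt w (w' t) (Ici t) t)
    (hv' : ContinuousWithinAt v' (Ico t₀ β) t₀) (hw' : ContinuousWithinAt w' (Ico t₀ β) t₀)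
    (hq : ContinuousWithinAt q (Ico t₀ β) t₀)
    (hvne : ∀ t ∈ Ioo t₀ β, ∀ j, v t j ≠ uθ) (hwne : ∀ t ∈ Ioo t₀ β, ∀ j, w t j ≠ uθ)
    (h₀ : v t₀ = w t₀) : EqOn v w (Icc t₀ β) := by
  have hinput : ∀ t ∈ Ico t₀ β, synapticInput ω uθ (v t) = synapticInput ω uθ (w t) :=
    fun t ht => by
      rw [synapticInput_eq_of_rightSmooth hβ hvode (hv.mono Ico_subset_Icc_self) hv' hq hvne t ht,
        synapticInput_eq_of_rightSmooth hβ hwode (hw.mono Ico_subset_Icc_self) hw' hq hwne t ht, h₀]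
  intro t ht
  funext j
  refine sub_eq_zero.1 <| eq_zero_of_abs_deriv_le_mul_abs_self_of_eq_zero_right (K := (τ j)⁻¹)
    (f := fun t => v t j - w t j) (f' := fun t => v' t j - w' t j)
    (((continuous_apply j).comp_continuousOn hv).sub ((continuous_apply j).comp_continuousOn hw))
    (fun t ht =>
      (hasDerivWithinAt_pi.1 (hvderiv t ht) j).sub (hasDerivWithinAt_pi.1 (hwderiv t ht) j))
    (by simp [h₀]) (fun t ht => ?_) t ht
  have hdiff : v' t j - w' t j = (τ j)⁻¹ * -(v t j - w t j) := by
    rw [eq_inv_mul_iff_mul_eq₀ (hτ j).ne', mul_sub, hvode t ht j, hwode t ht j, hinput t ht]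
    ring
  rw [hdiff, norm_mul, norm_neg, Real.norm_of_nonneg (inv_pos.2 (hτ j)).le]

end Network

theorem stmt_10_general
    (N : ℕ) [NeZero N] (T : ℝ)
    (τ : Fin N → ℝ) (hτ : ∀ i, 0 < τ i)
    (ω : Fin N → Fin N → ℝ) (uθ : ℝ) (uinit : Fin N → ℝ)
    (qinf : ℝ → Fin N → ℝ) (hq_cont : ContinuousOn qinf (Set.Icc 0 T))
    (v w : ℝ → Fin N → ℝ) (v' w' : ℝ → Fin N → ℝ)
    (hvderiv : ∀ t ∈ Set.Icc (0:ℝ) T, HasDerivWithinAt v (v' t) (Set.Icc 0 T) t)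
    (hwderiv : ∀ t ∈ Set.Icc (0:ℝ) T, HasDerivWithinAt w (w' t) (Set.Icc 0 T) t)
    (hvinit : v 0 = uinit) (hwinit : w 0 = uinit)
    -- the ODE holds for ALL t ∈ [0,T], including threshold times
    (hvODE : ∀ t ∈ Set.Icc (0:ℝ) T, ∀ i,
      τ i * v' t i = -v t i + (∑ j, ω i j * Heaviside (v t j - uθ)) + qinf t i)
    (hwODE : ∀ t ∈ Set.Icc (0:ℝ) T, ∀ i,
      τ i * w' t i = -w t i + (∑ j, ω i j * Heaviside (w t j - uθ)) + qinf t i)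
    -- v and w are extra threshold simple
    (hvets : ∃ L : ℕ, 0 < L ∧ ∃ a : ℕ → ℝ, a 0 = 0 ∧ a L = T ∧
      (∀ l < L, a l < a (l + 1)) ∧
      (∀ l < L, ∀ s ∈ Set.Ioo (a l) (a (l + 1)),
        (Finset.univ.inf' Finset.univ_nonempty fun j => |v s j - uθ|) ≠ 0))
    (hwets : ∃ L : ℕ, 0 < L ∧ ∃ a : ℕ → ℝ, a 0 = 0 ∧ a L = T ∧
      (∀ l < L, a l < a (l + 1)) ∧
      (∀ l < L, ∀ s ∈ Set.Ioo (a l) (a (l + 1)),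
        (Finset.univ.inf' Finset.univ_nonempty fun j => |w s j - uθ|) ≠ 0))
    -- v and w are right smooth
    (hvrs : ∀ t ∈ Set.Ico (0:ℝ) T, ContinuousWithinAt v' (Set.Ici t) t)
    (hwrs : ∀ t ∈ Set.Ico (0:ℝ) T, ContinuousWithinAt w' (Set.Ici t) t) :
    ∀ t ∈ Set.Icc (0:ℝ) T, v t = w t := by
  have hv : ContinuousOn v (Icc 0 T) := fun t ht => (hvderiv t ht).continuousWithinAt
  have hw : ContinuousOn w (Icc 0 T) := fun t ht => (hwderiv t ht).continuousWithinAt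
  have hclosed : IsClosed ({t | v t = w t} ∩ Icc 0 T) :=
    inter_comm (Icc 0 T) _ ▸ isClosed_Icc.isClosed_eq hv hw
  refine fun t ht => hclosed.Icc_subset_of_forall_mem_nhdsWithin (hvinit.trans hwinit.symm)
    (fun t₀ ⟨h₀, ht₀⟩ => ?_) ht
  obtain ⟨βv, hβv, hβvT, hvne⟩ := ExtraThresholdSimple.exists_Ioo_forall_ne hvets ht₀
  obtain ⟨βw, hβw, hβwT, hwne⟩ := ExtraThresholdSimple.exists_Ioo_forall_ne hwets ht₀
  set β := min βv βw
  have hβ : t₀ < β := lt_min hβv hβw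
  have hsub : Icc t₀ β ⊆ Icc 0 T := Icc_subset_Icc ht₀.1 ((min_le_left _ _).trans hβvT)
  have hsub' : Ico t₀ β ⊆ Ici t₀ := Ico_subset_Icc_self.trans Icc_subset_Ici_self
  have hderiv {u u' : ℝ → Fin N → ℝ}
      (hu : ∀ t ∈ Icc 0 T, HasDerivWithinAt u (u' t) (Icc 0 T) t) :
      ∀ t ∈ Ico t₀ β, HasDerivWithinAt u (u' t) (Ici t) t := fun t ht =>
    (hu t (hsub (Ico_subset_Icc_self ht))).mono_of_mem_nhdsWithin
      (Icc_mem_nhdsGE_of_mem ⟨ht₀.1.trans ht.1, ht.2.trans_le ((min_le_left _ _).trans hβvT)⟩)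
  have hvw := eqOn_Icc_of_rightSmooth hτ hβ
    (fun t ht => hvODE t (hsub (Ico_subset_Icc_self ht)))
    (fun t ht => hwODE t (hsub (Ico_subset_Icc_self ht))) (hv.mono hsub) (hw.mono hsub)
    (hderiv hvderiv) (hderiv hwderiv) ((hvrs t₀ ht₀).mono hsub') ((hwrs t₀ ht₀).mono hsub')
    ((hq_cont t₀ (Ico_subset_Icc_self ht₀)).mono (Ico_subset_Icc_self.trans hsub))
    (fun t ht => hvne t ⟨ht.1, ht.2.trans_le (min_le_left _ _)⟩)
    (fun t ht => hwne t ⟨ht.1, ht.2.trans_le (min_le_right _ _)⟩) h₀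
  exact mem_of_superset (Ioo_mem_nhdsGT hβ) fun t ht => hvw (Ioo_subset_Icc_self ht)

theorem stmt_10
    (N : ℕ) [NeZero N] (T : ℝ) (hT : 0 < T)
    (τ : Fin N → ℝ) (hτ : ∀ i, 0 < τ i)
    (ω : Fin N → Fin N → ℝ) (uθ : ℝ) (uinit : Fin N → ℝ)
    (qinf : ℝ → Fin N → ℝ) (hq_cont : ContinuousOn qinf (Set.Icc 0 T))
    (v w : ℝ → Fin N → ℝ) (v' w' : ℝ → Fin N → ℝ)
    (hvderiv : ∀ t ∈ Set.Icc (0:ℝ) T, HasDerivWithinAt v (v' t) (Set.Icc 0 T) t)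
    (hwderiv : ∀ t ∈ Set.Icc (0:ℝ) T, HasDerivWithinAt w (w' t) (Set.Icc 0 T) t)
    (hvinit : v 0 = uinit) (hwinit : w 0 = uinit)
    -- the ODE holds for ALL t ∈ [0,T], including threshold times
    (hvODE : ∀ t ∈ Set.Icc (0:ℝ) T, ∀ i,
      τ i * v' t i = -v t i + (∑ j, ω i j * Heaviside (v t j - uθ)) + qinf t i)
    (hwODE : ∀ t ∈ Set.Icc (0:ℝ) T, ∀ i,
      τ i * w' t i = -w t i + (∑ j, ω i j * Heaviside (w t j - uθ)) + qinf t i)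
    -- v and w are extra threshold simple
    (hvets : ∃ L : ℕ, 0 < L ∧ ∃ a : ℕ → ℝ, a 0 = 0 ∧ a L = T ∧
      (∀ l < L, a l < a (l + 1)) ∧
      (∀ l < L, ∀ s ∈ Set.Ioo (a l) (a (l + 1)),
        (Finset.univ.inf' Finset.univ_nonempty fun j => |v s j - uθ|) ≠ 0))
    (hwets : ∃ L : ℕ, 0 < L ∧ ∃ a : ℕ → ℝ, a 0 = 0 ∧ a L = T ∧
      (∀ l < L, a l < a (l + 1)) ∧
      (∀ l < L, ∀ s ∈ Set.Ioo (a l) (a (l + 1)),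
        (Finset.univ.inf' Finset.univ_nonempty fun j => |w s j - uθ|) ≠ 0))
    -- v and w are right smooth
    (hvrs : ∀ t ∈ Set.Ico (0:ℝ) T, ContinuousWithinAt v' (Set.Ici t) t)
    (hwrs : ∀ t ∈ Set.Ico (0:ℝ) T, ContinuousWithinAt w' (Set.Ici t) t) :
    ∀ t ∈ Set.Icc (0:ℝ) T, v t = w t :=
  stmt_10_general N T τ hτ ω uθ uinit qinf hq_cont v w v' w' hvderiv hwderiv hvinit hwinit hvODE
    hwODE hvets hwets hvrs hwrs
end

section
/- For each β ∈ ℕ let u_β : [0,T] → ℝ^N be differentiable with u_β(0) = u_init and τ_i u_{β,i}'(t) = -u_{β,i}(t) + Σ_{j=1}^N ω_{ij} S_β(u_{β,j}(t) - u_θ) + q_{β,i}(t) for all t ∈ (0,T] and all i, where each τ_i > 0, (S_β) satisfies Assumption A, and (q_β), q_∞ satisfy Assumption B. Let v be the uniform limit of some subsequence of (u_β). Suppose that the limit of EVERY uniformly convergent subsequence of (u_β) is extra threshold simple, right smooth, and satisfies τ_i z_i'(t) = -z_i(t) + Σ_{j=1}^N ω_{ij} H(z_j(t) - u_θ) + q_{∞,i}(t)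 for all t ∈ [0,T] and all i, with z(0) = u_init. Then the entire sequence (u_β) converges uniformly on [0,T] to v. -/
open Set Finset Filter MeasureTheory

section Aux
open Topology BoundedContinuousFunction

lemma heaviside_sign_const {f : ℝ → ℝ} {I : Set ℝ} (hI : I.OrdConnected)
    (hf : ContinuousOn f I) (hne : ∀ s ∈ I, f s ≠ 0) {s s' : ℝ} (hs : s ∈ I) (hs' : s' ∈ I) :
    Heaviside (f s) = Heaviside (f s') := by
  have hsub : uIcc s s' ⊆ I := hI.uIcc_subset hs hs'
  have hiv := intermediate_value_uIcc (hf.mono hsub)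
  have key : ∀ {a b : ℝ}, a ∈ I → b ∈ I → f a < 0 → 0 < f b → False := by
    intro a b ha hb h1 h2
    have h0 : (0:ℝ) ∈ uIcc (f a) (f b) := by
      rw [Set.mem_uIcc]; exact Or.inl ⟨h1.le, h2.le⟩
    obtain ⟨x, hx, hfx⟩ := intermediate_value_uIcc (hf.mono (hI.uIcc_subset ha hb)) h0
    exact hne x (hI.uIcc_subset ha hb hx) hfx
  rcases lt_or_gt_of_ne (hne s hs) with h1 | h1 <;>
    rcases lt_or_gt_of_ne (hne s' hs') with h2 | h2
  · simp [Heaviside, h1, h2]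
  · exact absurd (key hs hs' h1 h2) (by simp)
  · exact absurd (key hs' hs h2 h1) (by simp)
  · simp [Heaviside, h1.not_gt, h1.ne', h2.not_gt, h2.ne']

lemma exists_interval {L : ℕ} {a : ℕ → ℝ} {t T : ℝ} (h0 : a 0 = 0) (hL : a L = T)
    (ht : 0 ≤ t) (htT : t < T) :
    ∃ l < L, a l ≤ t ∧ t < a (l+1) := by
  by_contra h
  push_neg at h
  have key : ∀ k, k ≤ L → a k ≤ t := by
    intro k
    induction k with
    | zero => intro _; simpa [h0] using ht
    | succ n ih =>
      intro hk
      exact h n (Nat.lt_of_succ_le hk) (ih (Nat.le_of_succ_le hk))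
  have := key L le_rfl
  rw [hL] at this; linarith

lemma mono_aux {L : ℕ} {a : ℕ → ℝ} (hlt : ∀ l < L, a l < a (l+1)) :
    ∀ d k, k + d ≤ L → a k ≤ a (k + d) := by
  intro d
  induction d with
  | zero => intro k _; simp
  | succ n ih =>
    intro k h
    have h1 : a k ≤ a (k + n) := ih k (by omega)
    have h2 : a (k + n) < a (k + n + 1) := hlt _ (by omega)
    have : k + (n+1) = (k + n) + 1 := by omega
    rw [this]; linarith

variable {E : Type*} [NormedAddCommGroup E] [NormedSpace ℝ E]

lemma eq_zero_of_deriv_bound {f f' : ℝ → E} {a b K : ℝ}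
    (hf : ContinuousOn f (Icc a b))
    (hf' : ∀ x ∈ Ico a b, HasDerivWithinAt f (f' x) (Ici x) x)
    (ha : f a = 0) (bound : ∀ x ∈ Ico a b, ‖f' x‖ ≤ K * ‖f x‖) :
    ∀ x ∈ Icc a b, f x = 0 := by
  intro x hx
  have h := norm_le_gronwallBound_of_norm_deriv_right_le (δ := 0) (ε := 0) hf hf'
    (by simp [ha]) (fun t ht => by rw [add_zero]; exact bound t ht) x hx
  rw [gronwallBound_ε0_δ0] at h
  simpa using le_antisymm h (norm_nonneg _)

lemma icc_mem_nhdsWithin_Ici' {a b x : ℝ} (h1 : a ≤ x) (h2 : x < b) :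
    Icc a b ∈ nhdsWithin x (Ici x) :=
  Icc_mem_nhdsGE_of_mem ⟨h1, h2⟩

lemma bound_and_lip {f f' : ℝ → E} {T K C : ℝ}
    (hT : 0 < T) (hK : 0 < K) (hC : 0 ≤ C)
    (hf : ∀ t ∈ Icc 0 T, HasDerivWithinAt f (f' t) (Icc 0 T) t)
    (bound : ∀ t ∈ Ioc 0 T, ‖f' t‖ ≤ K * ‖f t‖ + C) :
    (∀ t ∈ Icc 0 T, ‖f t‖ ≤ gronwallBound ‖f 0‖ K C T) ∧
    (∀ s ∈ Icc (0:ℝ) T, ∀ t ∈ Icc (0:ℝ) T, s ≤ t →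
      ‖f t - f s‖ ≤ (K * gronwallBound ‖f 0‖ K C T + C) * (t - s)) := by
  have hcont : ContinuousOn f (Icc 0 T) := fun t ht => (hf t ht).continuousWithinAt
  have hderivI : ∀ x ∈ Ico (0:ℝ) T, HasDerivWithinAt f (f' x) (Ici x) x := fun x hx =>
    (hf x ⟨hx.1, hx.2.le⟩).mono_of_mem_nhdsWithin (icc_mem_nhdsWithin_Ici' hx.1 hx.2)
  -- step 1 : gronwall on [s, T] for s > 0
  have step1 : ∀ s ∈ Ioc (0:ℝ) T, ∀ t ∈ Icc s T, ‖f t‖ ≤ gronwallBound ‖f s‖ K C (t - s) := by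
    intro s hs
    refine norm_le_gronwallBound_of_norm_deriv_right_le
      (hcont.mono (Icc_subset_Icc hs.1.le le_rfl))
      (fun x hx => hderivI x ⟨hs.1.le.trans hx.1, hx.2⟩) le_rfl
      (fun x hx => bound x ⟨lt_of_lt_of_le hs.1 hx.1, hx.2.le⟩)
  -- step 2 : extend to s = 0 by a limiting argument
  have step2 : ∀ t ∈ Icc (0:ℝ) T, ‖f t‖ ≤ gronwallBound ‖f 0‖ K C t := by
    intro t ht
    rcases eq_or_lt_of_le ht.1 with h0 | h0
    · rw [← h0, gronwallBound_x0]
    · have hne : (𝓝[Ioo (0:ℝ) t] 0).NeBot := left_nhdsWithin_Ioo_neBot h0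
      have hmono : 𝓝[Ioo (0:ℝ) t] (0:ℝ) ≤ 𝓝[Icc (0:ℝ) T] 0 :=
        nhdsWithin_mono _ (fun x hx => ⟨hx.1.le, hx.2.le.trans ht.2⟩)
      have hfs : Tendsto (fun s => ‖f s‖) (𝓝[Ioo (0:ℝ) t] 0) (𝓝 ‖f 0‖) :=
        ((hcont.continuousWithinAt ⟨le_rfl, hT.le⟩).mono_left hmono).norm
      have hts : Tendsto (fun s : ℝ => t - s) (𝓝[Ioo (0:ℝ) t] 0) (𝓝 t) := by
        simpa using (tendsto_const_nhds.sub (tendsto_id.mono_left nhdsWithin_le_nhds) :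
          Tendsto (fun s : ℝ => t - s) (𝓝[Ioo (0:ℝ) t] 0) (𝓝 (t - 0)))
      have hgb : Tendsto (fun s => gronwallBound ‖f s‖ K C (t - s)) (𝓝[Ioo (0:ℝ) t] 0)
          (𝓝 (gronwallBound ‖f 0‖ K C t)) := by
        simp only [gronwallBound_of_K_ne_0 hK.ne']
        exact (hfs.mul ((Real.continuous_exp.tendsto _).comp (tendsto_const_nhds.mul hts))).add
          (tendsto_const_nhds.mul (((Real.continuous_exp.tendsto _).comp
            (tendsto_const_nhds.mul hts)).sub tendsto_const_nhds))
      refine ge_of_tendsto hgb ?_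
      filter_upwards [self_mem_nhdsWithin] with s hs
      exact step1 s ⟨hs.1, hs.2.le.trans ht.2⟩ t ⟨hs.2.le, ht.2⟩
  set R := gronwallBound ‖f 0‖ K C T with hR
  have hRmono : ∀ t ∈ Icc (0:ℝ) T, gronwallBound ‖f 0‖ K C t ≤ R := by
    intro t ht
    have expand : ∀ x, gronwallBound ‖f 0‖ K C x
        = ‖f 0‖ * Real.exp (K * x) + C / K * (Real.exp (K * x) - 1) :=
      fun x => congrFun (gronwallBound_of_K_ne_0 hK.ne') x
    rw [hR, expand t, expand T]
    have h1 : Real.exp (K * t) ≤ Real.exp (K * T) :=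
      Real.exp_le_exp.mpr (by nlinarith [ht.2, hK.le])
    have h2 : (0:ℝ) ≤ C / K := div_nonneg hC hK.le
    nlinarith [norm_nonneg (f 0), Real.exp_pos (K * t)]
  have hbnd : ∀ t ∈ Icc (0:ℝ) T, ‖f t‖ ≤ R := fun t ht => (step2 t ht).trans (hRmono t ht)
  refine ⟨hbnd, ?_⟩
  set D := K * R + C with hD
  -- step 4 : Lipschitz on [s,T], s > 0
  have step4 : ∀ s ∈ Ioc (0:ℝ) T, ∀ t ∈ Icc s T, ‖f t - f s‖ ≤ D * (t - s) := by
    intro s hs t ht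
    have h := norm_le_gronwallBound_of_norm_deriv_right_le (f' := f')
      (f := fun x => f x - f s) (δ := 0) (K := 0) (ε := D) (a := s) (b := T)
      ((hcont.mono (Icc_subset_Icc hs.1.le le_rfl)).sub continuousOn_const)
      (fun x hx => ((hderivI x ⟨hs.1.le.trans hx.1, hx.2⟩).sub_const (f s)))
      (by simp) ?_ t ht
    · rw [gronwallBound_K0] at h; simpa using h
    · intro x hx
      have := (bound x ⟨lt_of_lt_of_le hs.1 hx.1, hx.2.le⟩).trans
        (by nlinarith [hbnd x ⟨hs.1.le.trans hx.1, hx.2.le⟩, hK.le] :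
          K * ‖f x‖ + C ≤ D)
      simpa using this
  -- step 5 : extend to s = 0
  intro s hs t ht hst
  rcases eq_or_lt_of_le hs.1 with h0 | h0
  · rcases eq_or_lt_of_le hst with h1 | h1
    · simp [← h1]
    · rw [← h0] at h1 ⊢
      have hne : (𝓝[Ioo (0:ℝ) t] 0).NeBot := left_nhdsWithin_Ioo_neBot h1
      have hmono : 𝓝[Ioo (0:ℝ) t] (0:ℝ) ≤ 𝓝[Icc (0:ℝ) T] 0 :=
        nhdsWithin_mono _ (fun x hx => ⟨hx.1.le, hx.2.le.trans ht.2⟩)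
      have l1 : Tendsto (fun s' => ‖f t - f s'‖) (𝓝[Ioo (0:ℝ) t] 0) (𝓝 ‖f t - f 0‖) :=
        (tendsto_const_nhds.sub ((hcont.continuousWithinAt ⟨le_rfl, hT.le⟩).mono_left hmono)).norm
      have l2 : Tendsto (fun s' : ℝ => D * (t - s')) (𝓝[Ioo (0:ℝ) t] 0) (𝓝 (D * (t - 0))) :=
        tendsto_const_nhds.mul (tendsto_const_nhds.sub (tendsto_id.mono_left nhdsWithin_le_nhds))
      rw [sub_zero] at l2
      rw [sub_zero]
      refine le_of_tendsto_of_tendsto l1 l2 ?_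
      filter_upwards [self_mem_nhdsWithin] with s' hs'
      exact step4 s' ⟨hs'.1, hs'.2.le.trans ht.2⟩ t ⟨hs'.2.le, ht.2⟩
  · exact step4 s ⟨h0, hs.2⟩ t ⟨hst, ht.2⟩

lemma uniq_on_Icc {n : ℕ} [Nonempty (Fin n)] {T : ℝ} (hT : 0 < T)
    {τ : Fin n → ℝ} (hτ : ∀ i, 0 < τ i) {ω : Fin n → Fin n → ℝ} {uθ : ℝ}
    {qinf : ℝ → Fin n → ℝ} (hq : ContinuousOn qinf (Icc 0 T))
    {z v z' v' : ℝ → Fin n → ℝ}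
    (hzd : ∀ t ∈ Icc (0:ℝ) T, HasDerivWithinAt z (z' t) (Icc 0 T) t)
    (hvd : ∀ t ∈ Icc (0:ℝ) T, HasDerivWithinAt v (v' t) (Icc 0 T) t)
    (hzr : ∀ t ∈ Ico (0:ℝ) T, ContinuousWithinAt z' (Ici t) t)
    (hvr : ∀ t ∈ Ico (0:ℝ) T, ContinuousWithinAt v' (Ici t) t)
    (hzo : ∀ t ∈ Icc (0:ℝ) T, ∀ i,
      τ i * z' t i = -z t i + (∑ j, ω i j * Heaviside (z t j - uθ)) + qinf t i)
    (hvo : ∀ t ∈ Icc (0:ℝ) T, ∀ i,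
      τ i * v' t i = -v t i + (∑ j, ω i j * Heaviside (v t j - uθ)) + qinf t i)
    (hzs : ∀ t ∈ Ico (0:ℝ) T, ∃ b, t < b ∧ b ≤ T ∧ ∀ s ∈ Ioo t b, ∀ j, z s j ≠ uθ)
    (hvs : ∀ t ∈ Ico (0:ℝ) T, ∃ b, t < b ∧ b ≤ T ∧ ∀ s ∈ Ioo t b, ∀ j, v s j ≠ uθ)
    (h0 : z 0 = v 0) :
    EqOn z v (Icc 0 T) := by
  have hzc : ContinuousOn z (Icc 0 T) := fun t ht => (hzd t ht).continuousWithinAt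
  have hvc : ContinuousOn v (Icc 0 T) := fun t ht => (hvd t ht).continuousWithinAt
  set E := {t : ℝ | t ∈ Icc 0 T ∧ ∀ s ∈ Icc (0:ℝ) t, z s = v s} with hE
  have h0E : (0:ℝ) ∈ E := ⟨⟨le_rfl, hT.le⟩, fun s hs => by
    have : s = 0 := le_antisymm hs.2 hs.1
    rw [this, h0]⟩
  have hEne : E.Nonempty := ⟨0, h0E⟩
  have hbdd : BddAbove E := ⟨T, fun x hx => hx.1.2⟩
  set t₀ := sSup E with ht₀
  have ht₀mem : t₀ ∈ Icc (0:ℝ) T := ⟨le_csSup hbdd h0E, csSup_le hEne (fun x hx => hx.1.2)⟩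
  have hkey : ∀ s ∈ Icc (0:ℝ) t₀, z s = v s := by
    intro s hs
    rcases eq_or_lt_of_le hs.2 with heq | hlt
    · rcases eq_or_lt_of_le ht₀mem.1 with h00 | h00
      · have : s = 0 := by rw [heq, ← h00]
        rw [this, h0]
      · have hne : (𝓝[Ioo (0:ℝ) t₀] t₀).NeBot := right_nhdsWithin_Ioo_neBot h00
        have hmono : 𝓝[Ioo (0:ℝ) t₀] t₀ ≤ 𝓝[Icc (0:ℝ) T] t₀ :=
          nhdsWithin_mono _ (fun x hx => ⟨hx.1.le, hx.2.le.trans ht₀mem.2⟩)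
        have l1 : Tendsto z (𝓝[Ioo (0:ℝ) t₀] t₀) (𝓝 (z t₀)) :=
          (hzc.continuousWithinAt ht₀mem).mono_left hmono
        have l2 : Tendsto v (𝓝[Ioo (0:ℝ) t₀] t₀) (𝓝 (v t₀)) :=
          (hvc.continuousWithinAt ht₀mem).mono_left hmono
        have heqev : ∀ᶠ x in 𝓝[Ioo (0:ℝ) t₀] t₀, z x = v x := by
          filter_upwards [self_mem_nhdsWithin] with x hx
          obtain ⟨e, heE, hxe⟩ := exists_lt_of_lt_csSup hEne hx.2
          exact heE.2 x ⟨hx.1.le, hxe.le⟩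
        rw [heq]
        exact tendsto_nhds_unique (l1.congr' heqev) l2
    · obtain ⟨e, heE, hxe⟩ := exists_lt_of_lt_csSup hEne hlt
      exact heE.2 s ⟨hs.1, hxe.le⟩
  have ht₀T : t₀ = T := by
    by_contra hneT
    have ht₀lt : t₀ < T := lt_of_le_of_ne ht₀mem.2 hneT
    obtain ⟨b1, hb1t, hb1T, hb1⟩ := hzs t₀ ⟨ht₀mem.1, ht₀lt⟩
    obtain ⟨b2, hb2t, hb2T, hb2⟩ := hvs t₀ ⟨ht₀mem.1, ht₀lt⟩
    set b0 := min b1 b2 with hb0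
    have hb0t : t₀ < b0 := lt_min hb1t hb2t
    have hb0T : b0 ≤ T := le_trans (min_le_left _ _) hb1T
    set s₀ := (t₀ + b0)/2 with hs₀def
    have hs₀ : s₀ ∈ Ioo t₀ b0 := ⟨by rw [hs₀def]; linarith, by rw [hs₀def]; linarith⟩
    have hIsub : Ioo t₀ b0 ⊆ Icc (0:ℝ) T := fun x hx =>
      ⟨ht₀mem.1.trans hx.1.le, hx.2.le.trans hb0T⟩
    have hc : z t₀ = v t₀ := hkey t₀ ⟨ht₀mem.1, le_rfl⟩
    -- Heaviside constancy
    have hconstz : ∀ s ∈ Ioo t₀ b0, ∀ j, Heaviside (z s j - uθ) = Heaviside (z s₀ j - uθ) := by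
      intro s hs j
      refine heaviside_sign_const (f := fun x => z x j - uθ) (I := Ioo t₀ b0) Set.ordConnected_Ioo
        (((continuous_apply j).comp_continuousOn (hzc.mono hIsub)).sub continuousOn_const)
        (fun x hx => sub_ne_zero.mpr (hb1 x ⟨hx.1, hx.2.trans_le (min_le_left _ _)⟩ j)) hs hs₀
    have hconstv : ∀ s ∈ Ioo t₀ b0, ∀ j, Heaviside (v s j - uθ) = Heaviside (v s₀ j - uθ) := by
      intro s hs j
      refine heaviside_sign_const (f := fun x => v x j - uθ) (I := Ioo t₀ b0) Set.ordConnected_Ioo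
        (((continuous_apply j).comp_continuousOn (hvc.mono hIsub)).sub continuousOn_const)
        (fun x hx => sub_ne_zero.mpr (hb2 x ⟨hx.1, hx.2.trans_le (min_le_right _ _)⟩ j)) hs hs₀
    set Az : Fin n → ℝ := fun i => ∑ j, ω i j * Heaviside (z s₀ j - uθ) with hAz
    set Av : Fin n → ℝ := fun i => ∑ j, ω i j * Heaviside (v s₀ j - uθ) with hAv
    have hodez : ∀ s ∈ Ioo t₀ b0, ∀ i, τ i * z' s i = -z s i + Az i + qinf s i := by
      intro s hs i
      rw [hzo s (hIsub hs) i]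
      have : (∑ j, ω i j * Heaviside (z s j - uθ)) = Az i :=
        Finset.sum_congr rfl (fun j _ => by rw [hconstz s hs j])
      rw [this]
    have hodev : ∀ s ∈ Ioo t₀ b0, ∀ i, τ i * v' s i = -v s i + Av i + qinf s i := by
      intro s hs i
      rw [hvo s (hIsub hs) i]
      have : (∑ j, ω i j * Heaviside (v s j - uθ)) = Av i :=
        Finset.sum_congr rfl (fun j _ => by rw [hconstv s hs j])
      rw [this]
    -- limit of the ODE at t₀ from the right
    have hne : (𝓝[Ioo t₀ b0] t₀).NeBot := left_nhdsWithin_Ioo_neBot hb0t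
    have hm1 : 𝓝[Ioo t₀ b0] t₀ ≤ 𝓝[Ici t₀] t₀ := nhdsWithin_mono _ (fun x hx => hx.1.le)
    have hm2 : 𝓝[Ioo t₀ b0] t₀ ≤ 𝓝[Icc (0:ℝ) T] t₀ := nhdsWithin_mono _ hIsub
    have hlimz : ∀ i, τ i * z' t₀ i = -z t₀ i + Az i + qinf t₀ i := by
      intro i
      have l1 : Tendsto (fun s => τ i * z' s i) (𝓝[Ioo t₀ b0] t₀) (𝓝 (τ i * z' t₀ i)) :=
        tendsto_const_nhds.mul (((continuous_apply i).tendsto _).comp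
          ((hzr t₀ ⟨ht₀mem.1, ht₀lt⟩).mono_left hm1))
      have l2 : Tendsto (fun s => -z s i + Az i + qinf s i) (𝓝[Ioo t₀ b0] t₀)
          (𝓝 (-z t₀ i + Az i + qinf t₀ i)) :=
        (((((continuous_apply i).tendsto _).comp
          ((hzc.continuousWithinAt ht₀mem).mono_left hm2)).neg).add tendsto_const_nhds).add
          (((continuous_apply i).tendsto _).comp ((hq.continuousWithinAt ht₀mem).mono_left hm2))
      have heqev : (fun s => τ i * z' s i) =ᶠ[𝓝[Ioo t₀ b0] t₀]
          (fun s => -z s i + Az i + qinf s i) := by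
        filter_upwards [self_mem_nhdsWithin] with x hx
        exact hodez x hx i
      exact tendsto_nhds_unique (l1.congr' heqev) l2
    have hlimv : ∀ i, τ i * v' t₀ i = -v t₀ i + Av i + qinf t₀ i := by
      intro i
      have l1 : Tendsto (fun s => τ i * v' s i) (𝓝[Ioo t₀ b0] t₀) (𝓝 (τ i * v' t₀ i)) :=
        tendsto_const_nhds.mul (((continuous_apply i).tendsto _).comp
          ((hvr t₀ ⟨ht₀mem.1, ht₀lt⟩).mono_left hm1))
      have l2 : Tendsto (fun s => -v s i + Av i + qinf s i) (𝓝[Ioo t₀ b0] t₀)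
          (𝓝 (-v t₀ i + Av i + qinf t₀ i)) :=
        (((((continuous_apply i).tendsto _).comp
          ((hvc.continuousWithinAt ht₀mem).mono_left hm2)).neg).add tendsto_const_nhds).add
          (((continuous_apply i).tendsto _).comp ((hq.continuousWithinAt ht₀mem).mono_left hm2))
      have heqev : (fun s => τ i * v' s i) =ᶠ[𝓝[Ioo t₀ b0] t₀]
          (fun s => -v s i + Av i + qinf s i) := by
        filter_upwards [self_mem_nhdsWithin] with x hx
        exact hodev x hx i
      exact tendsto_nhds_unique (l1.congr' heqev) l2
    have hAzv : ∀ i, Az i = Av i := by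
      intro i
      have e1 := hzo t₀ ht₀mem i
      have e2 := hvo t₀ ht₀mem i
      have e3 := hlimz i
      have e4 := hlimv i
      rw [hc] at e1 e3
      linarith
    -- Gronwall on [t₀, s₀] for w = z - v
    set τm := Finset.univ.inf' Finset.univ_nonempty τ with hτm
    have hτmpos : 0 < τm := by
      rw [hτm, Finset.lt_inf'_iff]
      exact fun i _ => hτ i
    have hODEw : ∀ x ∈ Ico t₀ s₀, ∀ i, τ i * z' x i - τ i * v' x i = -(z x i - v x i) := by
      intro x hx i
      rcases eq_or_lt_of_le hx.1 with he | hlt'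
      · rw [← he]
        have e3 := hlimz i
        have e4 := hlimv i
        have e5 := hAzv i
        have e6 : z t₀ i = v t₀ i := by rw [hc]
        linarith
      · have h1 := hodez x ⟨hlt', hx.2.trans hs₀.2⟩ i
        have h2 := hodev x ⟨hlt', hx.2.trans hs₀.2⟩ i
        have e5 := hAzv i
        linarith
    have hxmem : ∀ x ∈ Icc t₀ s₀, x ∈ Icc (0:ℝ) T := fun x hx =>
      ⟨ht₀mem.1.trans hx.1, hx.2.trans (hs₀.2.le.trans hb0T)⟩
    have hzero : ∀ x ∈ Icc t₀ s₀, z x - v x = 0 := by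
      refine eq_zero_of_deriv_bound (f' := fun x => z' x - v' x) (K := 1/τm)
        ((hzc.mono (fun x hx => hxmem x hx)).sub (hvc.mono (fun x hx => hxmem x hx)))
        (fun x hx => ?_) (by rw [hc, sub_self]) (fun x hx => ?_)
      · have hxI : x ∈ Icc (0:ℝ) T := hxmem x ⟨hx.1, hx.2.le⟩
        have hxT : x < T := lt_of_lt_of_le hx.2 (hs₀.2.le.trans hb0T)
        exact ((hzd x hxI).sub (hvd x hxI)).mono_of_mem_nhdsWithin
          (icc_mem_nhdsWithin_Ici' hxI.1 hxT)
      · rw [pi_norm_le_iff_of_nonneg (by positivity)]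
        intro i
        simp only [Pi.sub_apply]
        have hode := hODEw x hx i
        have hval : z' x i - v' x i = -((z x i - v x i) / τ i) := by
          rw [← neg_div, eq_div_iff (hτ i).ne']
          linarith
        rw [hval, Real.norm_eq_abs, abs_neg, abs_div, abs_of_pos (hτ i)]
        have h1 : |z x i - v x i| ≤ ‖z x - v x‖ := by
          have := norm_le_pi_norm (z x - v x) i
          simpa [Real.norm_eq_abs] using this
        have h2 : τm ≤ τ i := Finset.inf'_le τ (Finset.mem_univ i)
        rw [one_div, inv_mul_eq_div]
        exact div_le_div₀ (norm_nonneg _) h1 hτmpos h2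
    have hs₀E : s₀ ∈ E := by
      refine ⟨⟨ht₀mem.1.trans hs₀.1.le, hs₀.2.le.trans hb0T⟩, fun s hs => ?_⟩
      rcases le_or_gt s t₀ with h | h
      · exact hkey s ⟨hs.1, h⟩
      · exact sub_eq_zero.mp (hzero s ⟨h.le, hs.2⟩)
    have : s₀ ≤ t₀ := le_csSup hbdd hs₀E
    linarith [hs₀.1]
  intro s hs
  exact hkey s ⟨hs.1, le_of_le_of_eq hs.2 ht₀T.symm⟩

set_option synthInstance.maxHeartbeats 1000000 in
set_option maxHeartbeats 1000000 in
lemma extract_unif {T R D : ℝ} {n : ℕ} (hD : 0 ≤ D) {f : ℕ → ℝ → Fin n → ℝ}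
    (hcont : ∀ k, ContinuousOn (f k) (Icc 0 T))
    (hbnd : ∀ k, ∀ t ∈ Icc (0:ℝ) T, ‖f k t‖ ≤ R)
    (hlip : ∀ k, ∀ s ∈ Icc (0:ℝ) T, ∀ t ∈ Icc (0:ℝ) T, dist (f k s) (f k t) ≤ D * dist s t) :
    ∃ ρ : ℕ → ℕ, StrictMono ρ ∧ ∃ z : ℝ → Fin n → ℝ,
      TendstoUniformlyOn (fun k => f (ρ k)) z Filter.atTop (Icc 0 T) := by
  haveI : CompactSpace (Icc (0:ℝ) T) := isCompact_iff_compactSpace.mp isCompact_Icc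
  set F : ℕ → (Icc (0:ℝ) T) →ᵇ (Fin n → ℝ) := fun k =>
    BoundedContinuousFunction.mkOfCompact ⟨(Icc (0:ℝ) T).restrict (f k), (hcont k).restrict⟩
    with hF
  have hFapp : ∀ k (x : Icc (0:ℝ) T), F k x = f k x := fun k x => rfl
  have hin : ∀ (g : (Icc (0:ℝ) T) →ᵇ (Fin n → ℝ)) (x : Icc (0:ℝ) T),
      g ∈ Set.range F → g x ∈ Metric.closedBall (0 : Fin n → ℝ) R := by
    rintro g x ⟨k, rfl⟩
    simpa [Metric.mem_closedBall, dist_zero_right, hFapp] using hbnd k x x.2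
  have hequi : Equicontinuous ((↑) : (Set.range F) → (Icc (0:ℝ) T) → (Fin n → ℝ)) := by
    intro x₀
    rw [Metric.equicontinuousAt_iff]
    intro ε hε
    refine ⟨ε / (D + 1), by positivity, ?_⟩
    rintro x hx ⟨g, k, rfl⟩
    simp only [hFapp]
    rw [dist_comm]
    calc dist (f k x) (f k x₀) ≤ D * dist x x₀ := hlip k x x.2 x₀ x₀.2
    _ ≤ D * (ε / (D+1)) := by
        refine mul_le_mul_of_nonneg_left ?_ hD
        rw [Subtype.dist_eq] at hx ⊢
        exact hx.le
    _ < ε := by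
        rw [div_eq_inv_mul, ← mul_assoc]
        have : D * (D+1)⁻¹ < 1 := by
          rw [mul_inv_lt_iff₀ (by linarith)]; linarith
        nlinarith
  have hcompact := BoundedContinuousFunction.arzela_ascoli
    (Metric.closedBall (0 : Fin n → ℝ) R) (isCompact_closedBall _ _) (Set.range F) hin hequi
  obtain ⟨g, _, ρ, hρ, hconv⟩ :=
    hcompact.tendsto_subseq (x := F) (fun k => subset_closure (Set.mem_range_self k))
  refine ⟨ρ, hρ, fun t => if h : t ∈ Icc (0:ℝ) T then g ⟨t, h⟩ else 0, ?_⟩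
  rw [tendstoUniformlyOn_iff_tendstoUniformly_comp_coe]
  have h1 : TendstoUniformly (fun k => ⇑(F (ρ k))) (⇑g) Filter.atTop :=
    BoundedContinuousFunction.tendsto_iff_tendstoUniformly.mp hconv
  have h2 : ((fun t => if h : t ∈ Icc (0:ℝ) T then g ⟨t, h⟩ else 0) ∘
      ((↑) : Icc (0:ℝ) T → ℝ)) = ⇑g := by
    funext x
    simp only [Function.comp_apply, dif_pos x.2]
  rw [h2]
  exact h1

lemma ts_to_local {n : ℕ} [Nonempty (Fin n)] {T uθ : ℝ} {z : ℝ → Fin n → ℝ}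
    (hts : ∃ L : ℕ, 0 < L ∧ ∃ a : ℕ → ℝ, a 0 = 0 ∧ a L = T ∧ (∀ l < L, a l < a (l+1)) ∧
      (∀ l < L, ∀ s ∈ Set.Ioo (a l) (a (l+1)),
        (Finset.univ.inf' Finset.univ_nonempty fun j => |z s j - uθ|) ≠ 0)) :
    ∀ t ∈ Ico (0:ℝ) T, ∃ b, t < b ∧ b ≤ T ∧ ∀ s ∈ Ioo t b, ∀ j, z s j ≠ uθ := by
  obtain ⟨L, hL, a, h0, hLa, hlt, hm⟩ := hts
  intro t ht
  obtain ⟨l, hlL, hal, htl⟩ := exists_interval h0 hLa ht.1 ht.2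
  refine ⟨a (l+1), htl, ?_, ?_⟩
  · have h := mono_aux hlt (L - (l+1)) (l+1) (by omega)
    rw [show l+1 + (L - (l+1)) = L by omega, hLa] at h
    exact h
  · intro s hs j hcontra
    have hsI : s ∈ Ioo (a l) (a (l+1)) := ⟨lt_of_le_of_lt hal hs.1, hs.2⟩
    apply hm l hlL s hsI
    have h1 : (Finset.univ.inf' Finset.univ_nonempty fun j => |z s j - uθ|) ≤ |z s j - uθ| :=
      Finset.inf'_le _ (Finset.mem_univ j)
    have h2 : (0:ℝ) ≤ Finset.univ.inf' Finset.univ_nonempty fun j => |z s j - uθ| :=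
      Finset.le_inf' _ _ (fun j _ => abs_nonneg _)
    rw [hcontra, sub_self, abs_zero] at h1
    linarith

end Aux
theorem stmt_11
    (N : ℕ) [NeZero N] (T : ℝ) (hT : 0 < T)
    (τ : Fin N → ℝ) (hτ : ∀ i, 0 < τ i)
    (ω : Fin N → Fin N → ℝ) (uθ : ℝ) (uinit : Fin N → ℝ)
    -- Assumption A
    (S : ℕ → ℝ → ℝ)
    (hLip : ∀ β, ∃ K : NNReal, LipschitzWith K (S β))
    (hbd : ∀ β x, S β x ∈ Set.Icc (0:ℝ) 1)
    (hA : ∀ ε > (0:ℝ), ∀ δ > (0:ℝ), ∃ Q : ℕ, ∀ β > Q,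
      (∀ x < -δ, |S β x| < ε) ∧ (∀ x > δ, |1 - S β x| < ε))
    -- Assumption B
    (q : ℕ → ℝ → Fin N → ℝ) (qinf : ℝ → Fin N → ℝ)
    (hq_cont : ∀ β, ContinuousOn (q β) (Set.Icc 0 T))
    (hqinf_cont : ContinuousOn qinf (Set.Icc 0 T))
    (B : ℝ) (hqB : ∀ β, ∀ t ∈ Set.Icc (0:ℝ) T, ∀ i, |q β t i| ≤ B)
    (hq_ptw : ∀ t ∈ Set.Icc (0:ℝ) T,
      Filter.Tendsto (fun β => q β t) Filter.atTop (nhds (qinf t)))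
    (hq_int : ∀ t ∈ Set.Icc (0:ℝ) T, ∀ i,
      Filter.Tendsto (fun β => ∫ s in (0:ℝ)..t, q β s i) Filter.atTop
        (nhds (∫ s in (0:ℝ)..t, qinf s i)))
    -- the regularized solutions
    (u u' : ℕ → ℝ → Fin N → ℝ)
    (hderiv : ∀ β, ∀ t ∈ Set.Icc (0:ℝ) T,
      HasDerivWithinAt (u β) (u' β t) (Set.Icc 0 T) t)
    (hinit : ∀ β, u β 0 = uinit)
    (hODE : ∀ β, ∀ t ∈ Set.Ioc (0:ℝ) T, ∀ i,
      τ i * u' β t i = -u β t i + (∑ j, ω i j * S β (u β t j - uθ)) + q β t i)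
    -- v is the uniform limit of some subsequence
    (φ : ℕ → ℕ) (hφ : StrictMono φ) (v : ℝ → Fin N → ℝ)
    (hconv : TendstoUniformlyOn (fun k => u (φ k)) v Filter.atTop (Set.Icc 0 T))
    -- every uniformly convergent subsequence has an extra threshold simple,
    -- right smooth limit solving the Heaviside problem on all of [0,T]
    (hlimits : ∀ ψ : ℕ → ℕ, StrictMono ψ → ∀ z : ℝ → Fin N → ℝ,
      TendstoUniformlyOn (fun k => u (ψ k)) z Filter.atTop (Set.Icc 0 T) →
      (∃ L : ℕ, 0 < L ∧ ∃ a : ℕ → ℝ, a 0 = 0 ∧ a L = T ∧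
        (∀ l < L, a l < a (l + 1)) ∧
        (∀ l < L, ∀ s ∈ Set.Ioo (a l) (a (l + 1)),
          (Finset.univ.inf' Finset.univ_nonempty fun j => |z s j - uθ|) ≠ 0)) ∧
      z 0 = uinit ∧
      ∃ z' : ℝ → Fin N → ℝ,
        (∀ t ∈ Set.Icc (0:ℝ) T, HasDerivWithinAt z (z' t) (Set.Icc 0 T) t) ∧
        (∀ t ∈ Set.Ico (0:ℝ) T, ContinuousWithinAt z' (Set.Ici t) t) ∧
        (∀ t ∈ Set.Icc (0:ℝ) T, ∀ i,
          τ i * z' t i = -z t i + (∑ j, ω i j * Heaviside (z t j - uθ)) + qinf t i)) :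
    TendstoUniformlyOn u v Filter.atTop (Set.Icc 0 T) := by
  haveI : Nonempty (Fin N) := ⟨⟨0, Nat.pos_of_ne_zero (NeZero.ne N)⟩⟩
  set τm := Finset.univ.inf' Finset.univ_nonempty τ with hτm
  have hτmpos : 0 < τm := by
    rw [hτm, Finset.lt_inf'_iff]
    exact fun i _ => hτ i
  set O := ∑ i, ∑ j, |ω i j| with hO
  have hOpos : 0 ≤ O := Finset.sum_nonneg fun i _ => Finset.sum_nonneg fun j _ => abs_nonneg _
  have hB0 : 0 ≤ B := le_trans (abs_nonneg _) (hqB 0 0 ⟨le_rfl, hT.le⟩ (Classical.arbitrary _))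
  set K := 1/τm with hK
  have hKpos : 0 < K := by positivity
  set C := (O + B)/τm with hC
  have hCpos : 0 ≤ C := by positivity
  -- uniform derivative bound
  have hdb : ∀ β, ∀ t ∈ Set.Ioc (0:ℝ) T, ‖u' β t‖ ≤ K * ‖u β t‖ + C := by
    intro β t ht
    rw [pi_norm_le_iff_of_nonneg (by positivity)]
    intro i
    have hode := hODE β t ht i
    have hS : |∑ j, ω i j * S β (u β t j - uθ)| ≤ O := by
      calc |∑ j, ω i j * S β (u β t j - uθ)| ≤ ∑ j, |ω i j * S β (u β t j - uθ)| :=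
            Finset.abs_sum_le_sum_abs _ _
        _ ≤ ∑ j, |ω i j| := by
            refine Finset.sum_le_sum (fun j _ => ?_)
            rw [abs_mul]
            have h1 := (hbd β (u β t j - uθ)).1
            have h2 := (hbd β (u β t j - uθ)).2
            have h3 : |S β (u β t j - uθ)| ≤ 1 := abs_le.mpr ⟨by linarith, h2⟩
            exact mul_le_of_le_one_right (abs_nonneg _) h3
        _ ≤ O := Finset.single_le_sum (f := fun i => ∑ j, |ω i j|)
            (fun i _ => Finset.sum_nonneg fun j _ => abs_nonneg _) (Finset.mem_univ i)
    have hq' := hqB β t ⟨ht.1.le, ht.2⟩ i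
    have hui : |u β t i| ≤ ‖u β t‖ := by
      simpa [Real.norm_eq_abs] using norm_le_pi_norm (u β t) i
    have h1 : |τ i * u' β t i| ≤ ‖u β t‖ + O + B := by
      rw [hode]
      calc |-u β t i + (∑ j, ω i j * S β (u β t j - uθ)) + q β t i|
          ≤ |-u β t i + (∑ j, ω i j * S β (u β t j - uθ))| + |q β t i| := abs_add_le _ _
        _ ≤ |-u β t i| + |∑ j, ω i j * S β (u β t j - uθ)| + |q β t i| := by
            have := abs_add_le (-u β t i) (∑ j, ω i j * S β (u β t j - uθ))
            linarith
        _ ≤ ‖u β t‖ + O + B := by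
            rw [abs_neg]
            linarith
    have h2 : |u' β t i| = |τ i * u' β t i| / τ i := by
      rw [abs_mul, abs_of_pos (hτ i), mul_div_cancel_left₀ _ (hτ i).ne']
    rw [Real.norm_eq_abs, h2]
    have hτi : τm ≤ τ i := Finset.inf'_le τ (Finset.mem_univ i)
    calc |τ i * u' β t i| / τ i ≤ (‖u β t‖ + O + B) / τm :=
          div_le_div₀ (by positivity) h1 hτmpos hτi
      _ = K * ‖u β t‖ + C := by
          rw [hK, hC]
          field_simp
          ring
  have hbl : ∀ β, (∀ t ∈ Set.Icc (0:ℝ) T, ‖u β t‖ ≤ gronwallBound ‖uinit‖ K C T) ∧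
      (∀ s ∈ Set.Icc (0:ℝ) T, ∀ t ∈ Set.Icc (0:ℝ) T, s ≤ t →
        ‖u β t - u β s‖ ≤ (K * gronwallBound ‖uinit‖ K C T + C) * (t - s)) := by
    intro β
    have h := bound_and_lip hT hKpos hCpos (hderiv β) (hdb β)
    rwa [hinit β] at h
  set R := gronwallBound ‖uinit‖ K C T with hR
  have hR0 : 0 ≤ R := le_trans (norm_nonneg _) ((hbl 0).1 0 ⟨le_rfl, hT.le⟩)
  set D := K * R + C with hD
  have hD0 : 0 ≤ D := by positivity
  have hlipd : ∀ β, ∀ s ∈ Set.Icc (0:ℝ) T, ∀ t ∈ Set.Icc (0:ℝ) T,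
      dist (u β s) (u β t) ≤ D * dist s t := by
    intro β s hsI t htI
    rcases le_total s t with h | h
    · rw [dist_comm, dist_eq_norm, Real.dist_eq, abs_sub_comm, abs_of_nonneg (sub_nonneg.mpr h)]
      exact (hbl β).2 s hsI t htI h
    · rw [dist_eq_norm, Real.dist_eq, abs_of_nonneg (sub_nonneg.mpr h)]
      exact (hbl β).2 t htI s hsI h
  -- suppose not
  by_contra hcon
  rw [Metric.tendstoUniformlyOn_iff] at hcon
  obtain ⟨ε, hε, hfreq⟩ : ∃ ε > (0:ℝ), ∃ᶠ n in Filter.atTop,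
      ∃ x ∈ Set.Icc (0:ℝ) T, ε ≤ dist (v x) (u n x) := by
    by_contra hno
    push_neg at hno
    apply hcon
    intro ε hε
    have h := hno ε hε
    exact h
  obtain ⟨ψ, hψ, hψP⟩ := Filter.extraction_of_frequently_atTop hfreq
  obtain ⟨ρ, hρ, z, hzconv⟩ := extract_unif (f := fun k => u (ψ k)) hD0
    (fun k t ht => (hderiv (ψ k) t ht).continuousWithinAt)
    (fun k t ht => (hbl (ψ k)).1 t ht)
    (fun k s hs t ht => hlipd (ψ k) s hs t ht)
  obtain ⟨hts_z, hz0, z', hz'd, hz'r, hz'o⟩ := hlimits (ψ ∘ ρ) (hψ.comp hρ) z hzconv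
  obtain ⟨hts_v, hv0, v', hv'd, hv'r, hv'o⟩ := hlimits φ hφ v hconv
  have heq : Set.EqOn z v (Set.Icc 0 T) :=
    uniq_on_Icc hT hτ hqinf_cont hz'd hv'd hz'r hv'r hz'o hv'o
      (ts_to_local hts_z) (ts_to_local hts_v) (by rw [hz0, hv0])
  rw [Metric.tendstoUniformlyOn_iff] at hzconv
  obtain ⟨k, hk⟩ := (hzconv ε hε).exists
  obtain ⟨x, hxI, hx⟩ := hψP (ρ k)
  rw [← heq hxI] at hx
  exact absurd (hk x hxI) (not_lt.mpr hx)
end
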